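/- arXiv:math-ph/9911009 — 4 statements merged into one kernel-verified Lean document; each statement's English description precedes it below -/
import Mathlib

section
/- Let Δ₊ be the bounded self-adjoint operator on ℓ²(ℕ; ℂ) defined by (Δ₊u)(n) = u(n+1) + u(n−1) for n ≥ 1 and (Δ₊u)(0) = u(1). Then the spectrum of Δ₊ contains the closed interval [−2, 2]. -/
/-!
If `x = ω + ω⁻¹` with `‖ω‖ = 1`, then `(ω ^ n)` solves `Δ₊ u = x u` away from `n = 0`. Its
truncations to `n < N + 2` have norm `√(N + 2)`, while `x - Δ₊` maps them to vectors supported on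
`{0, N + 1, N + 2}` with norm bounded independently of `N`. A bounded inverse of `x - Δ₊` would
bound the norms of the truncations, so `x` lies in the spectrum.
-/

open Filter

section ApproximateEigenvalues

variable {𝕜 E : Type*} [NontriviallyNormedField 𝕜] [NormedAddCommGroup E] [NormedSpace 𝕜 E]

theorem exists_norm_le_mul_norm_smul_sub_of_notMem_spectrum {T : E →L[𝕜] E} {a : 𝕜}
    (ha : a ∉ spectrum 𝕜 T) : ∃ C : ℝ, 0 ≤ C ∧ ∀ v, ‖v‖ ≤ C * ‖a • v - T v‖ := by
  obtain ⟨B, hB⟩ := spectrum.notMem_iff.mp ha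
  refine ⟨‖(↑B⁻¹ : E →L[𝕜] E)‖, norm_nonneg _, fun v => ?_⟩
  have hBv : (B : E →L[𝕜] E) v = a • v - T v := by simp [hB, Algebra.algebraMap_eq_smul_one]
  calc ‖v‖ = ‖(↑B⁻¹ : E →L[𝕜] E) ((B : E →L[𝕜] E) v)‖ := by
        rw [← mul_apply_eq_comp, B.inv_mul, one_apply_eq_self]
    _ ≤ _ := by rw [← hBv]; exact ContinuousLinearMap.le_opNorm _ _

theorem mem_spectrum_of_tendsto_norm_of_norm_smul_sub_le {T : E →L[𝕜] E} {a : 𝕜} {v : ℕ → E}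
    {D : ℝ} (hv : Tendsto (fun N => ‖v N‖) atTop atTop) (hD : ∀ N, ‖a • v N - T (v N)‖ ≤ D) :
    a ∈ spectrum 𝕜 T := by
  by_contra ha
  obtain ⟨C, hC₀, hC⟩ := exists_norm_le_mul_norm_smul_sub_of_notMem_spectrum ha
  obtain ⟨N, hN⟩ := (hv.eventually_gt_atTop (C * D)).exists
  exact hN.not_ge ((hC (v N)).trans (mul_le_mul_of_nonneg_left (hD N) hC₀))

end ApproximateEigenvalues

theorem lp.norm_le_sum_norm_of_forall_notMem_eq_zero {α : Type*} {E : α → Type*}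
    [∀ i, NormedAddCommGroup (E i)] [DecidableEq α] {p : ENNReal} [Fact (1 ≤ p)] (f : lp E p)
    (s : Finset α) (hf : ∀ i ∉ s, f i = 0) : ‖f‖ ≤ ∑ i ∈ s, ‖f i‖ := by
  have hsum : f = ∑ i ∈ s, lp.single p i (f i) := by
    ext i
    rw [lp.coeFn_sum, Finset.sum_apply]
    simp only [lp.single_apply, Finset.sum_pi_single]
    split_ifs with hi
    · rfl
    · exact hf i hi
  have hp : 0 < p := zero_lt_one.trans_le Fact.out
  calc ‖f‖ = ‖∑ i ∈ s, lp.single p i (f i)‖ := congrArg _ hsum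
    _ ≤ ∑ i ∈ s, ‖lp.single p i (f i)‖ := norm_sum_le _ _
    _ = ∑ i ∈ s, ‖f i‖ := by simp only [lp.norm_single hp]

section TruncatedGeometric

variable {𝕜 : Type*} [NormedField 𝕜]

noncomputable def truncGeom (ω : 𝕜) (N : ℕ) : lp (fun _ : ℕ => 𝕜) 2 :=
  ∑ k ∈ Finset.range N, lp.single 2 k (ω ^ k)

theorem truncGeom_apply (ω : 𝕜) (N n : ℕ) : truncGeom ω N n = if n < N then ω ^ n else 0 := by
  rw [truncGeom, lp.coeFn_sum, Finset.sum_apply]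
  simp [Pi.single_apply]

theorem norm_truncGeom_apply_le {ω : 𝕜} (hω : ‖ω‖ = 1) (N n : ℕ) : ‖truncGeom ω N n‖ ≤ 1 := by
  rw [truncGeom_apply]
  split_ifs <;> simp [hω]

theorem norm_truncGeom {ω : 𝕜} (hω : ‖ω‖ = 1) (N : ℕ) : ‖truncGeom ω N‖ = √N := by
  have h := lp.norm_sum_single (p := 2) (E := fun _ : ℕ => 𝕜) (by norm_num) (ω ^ ·) (Finset.range N)
  simp only [ENNReal.toReal_ofNat, norm_pow, hω, one_pow, Real.one_rpow, Finset.sum_const,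
    Finset.card_range, nsmul_eq_mul, mul_one] at h
  rw [← h, Real.rpow_two, Real.sqrt_sq (norm_nonneg _)]
  rfl

end TruncatedGeometric

theorem exists_norm_eq_one_sq_add_one_eq_mul {x : ℝ} (hx : x ∈ Set.Icc (-2 : ℝ) 2) :
    ∃ ω : ℂ, ‖ω‖ = 1 ∧ ω ^ 2 + 1 = x * ω := by
  obtain ⟨y, hy⟩ : ∃ y : ℝ, y ^ 2 = 1 - (x / 2) ^ 2 :=
    ⟨_, Real.sq_sqrt (by nlinarith [hx.1, hx.2])⟩
  refine ⟨⟨x / 2, y⟩, ?_, ?_⟩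
  · rw [Complex.norm_def, Complex.normSq_mk, Real.sqrt_eq_one]
    linear_combination hy
  · apply Complex.ext
    · simp only [pow_two, Complex.add_re, Complex.mul_re, Complex.one_re, Complex.ofReal_re,
        Complex.ofReal_im, zero_mul, sub_zero]
      linear_combination -hy
    · simp only [pow_two, Complex.add_im, Complex.mul_im, Complex.one_im, add_zero,
        Complex.ofReal_re, Complex.ofReal_im, zero_mul]
      ring

section HalfLineLaplacian

variable {Δ : lp (fun _ : ℕ => ℂ) 2 →L[ℂ] lp (fun _ : ℕ => ℂ) 2}

theorem smul_sub_apply_truncGeom_eq_zero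
    (hΔ : ∀ (u : lp (fun _ : ℕ => ℂ) 2) (n : ℕ),
      Δ u n = if n = 0 then u 1 else u (n + 1) + u (n - 1))
    {x ω : ℂ} (hrec : ω ^ 2 + 1 = x * ω) {N n : ℕ} (hn : n ∉ ({0, N + 1, N + 2} : Finset ℕ)) :
    (x • truncGeom ω (N + 2) - Δ (truncGeom ω (N + 2))) n = 0 := by
  simp only [Finset.mem_insert, Finset.mem_singleton, not_or] at hn
  obtain ⟨m, rfl⟩ : ∃ m, n = m + 1 := Nat.exists_eq_add_one.mpr (by omega)
  rw [lp.coeFn_sub, lp.coeFn_smul, Pi.sub_apply, Pi.smul_apply, smul_eq_mul, hΔ,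
    if_neg m.succ_ne_zero, Nat.add_sub_cancel, truncGeom_apply, truncGeom_apply, truncGeom_apply]
  by_cases hm : m + 1 < N + 1
  · rw [if_pos (by omega), if_pos (by omega), if_pos (by omega)]
    linear_combination -ω ^ m * hrec
  · rw [if_neg (by omega), if_neg (by omega), if_neg (by omega)]
    ring

theorem norm_smul_sub_apply_truncGeom_le
    (hΔ : ∀ (u : lp (fun _ : ℕ => ℂ) 2) (n : ℕ),
      Δ u n = if n = 0 then u 1 else u (n + 1) + u (n - 1))
    {x ω : ℂ} (hx : ‖x‖ ≤ 2) (hω : ‖ω‖ = 1) (N n : ℕ) :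
    ‖(x • truncGeom ω N - Δ (truncGeom ω N)) n‖ ≤ 4 := by
  have hv := norm_truncGeom_apply_le hω N
  have hΔv : ‖Δ (truncGeom ω N) n‖ ≤ 2 := by
    rw [hΔ]
    split_ifs
    · linarith [hv 1]
    · exact (norm_add_le _ _).trans (by linarith [hv (n + 1), hv (n - 1)])
  calc ‖(x • truncGeom ω N - Δ (truncGeom ω N)) n‖
      = ‖x * truncGeom ω N n - Δ (truncGeom ω N) n‖ := rfl
    _ ≤ ‖x‖ * ‖truncGeom ω N n‖ + ‖Δ (truncGeom ω N) n‖ := by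
      grw [norm_sub_le, norm_mul]
    _ ≤ 2 * 1 + 2 := by gcongr; exact hv n
    _ = 4 := by norm_num

theorem norm_smul_sub_truncGeom_le
    (hΔ : ∀ (u : lp (fun _ : ℕ => ℂ) 2) (n : ℕ),
      Δ u n = if n = 0 then u 1 else u (n + 1) + u (n - 1))
    {x ω : ℂ} (hx : ‖x‖ ≤ 2) (hω : ‖ω‖ = 1) (hrec : ω ^ 2 + 1 = x * ω) (N : ℕ) :
    ‖x • truncGeom ω (N + 2) - Δ (truncGeom ω (N + 2))‖ ≤ 12 :=
  calc _ ≤ ∑ n ∈ ({0, N + 1, N + 2} : Finset ℕ),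
        ‖(x • truncGeom ω (N + 2) - Δ (truncGeom ω (N + 2))) n‖ :=
        lp.norm_le_sum_norm_of_forall_notMem_eq_zero _ _
          fun _ hn => smul_sub_apply_truncGeom_eq_zero hΔ hrec hn
    _ ≤ ∑ _n ∈ ({0, N + 1, N + 2} : Finset ℕ), (4 : ℝ) :=
        Finset.sum_le_sum fun n _ => norm_smul_sub_apply_truncGeom_le hΔ hx hω _ n
    _ ≤ 12 := by grw [Finset.sum_const, Finset.card_le_three]; norm_num

end HalfLineLaplacian

/-- The spectrum of the half-line discrete Laplacian `Δ₊` on `ℓ²(ℕ; ℂ)`,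
`(Δ₊u)(n) = u(n+1) + u(n−1)` for `n ≥ 1` and `(Δ₊u)(0) = u(1)`,
contains the closed interval `[−2, 2]`. -/
theorem spectrum_of_halfline_laplacian_contains_interval
    (Δp : lp (fun _ : ℕ => ℂ) 2 →L[ℂ] lp (fun _ : ℕ => ℂ) 2)
    (hΔp : ∀ (u : lp (fun _ : ℕ => ℂ) 2) (n : ℕ),
      Δp u n = if n = 0 then u 1 else u (n + 1) + u (n - 1)) :
    Complex.ofReal '' Set.Icc (-2 : ℝ) 2 ⊆ spectrum ℂ Δp := by
  rintro _ ⟨x, hx, rfl⟩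
  obtain ⟨ω, hω, hrec⟩ := exists_norm_eq_one_sq_add_one_eq_mul hx
  have hx2 : ‖(x : ℂ)‖ ≤ 2 := by rw [Complex.norm_real, Real.norm_eq_abs, abs_le]; exact hx
  refine mem_spectrum_of_tendsto_norm_of_norm_smul_sub_le (v := fun N => truncGeom ω (N + 2))
    ?_ (norm_smul_sub_truncGeom_le hΔp hx2 hω hrec)
  simp only [norm_truncGeom hω]
  exact Real.tendsto_sqrt_atTop.comp
    (tendsto_natCast_atTop_atTop.comp (tendsto_add_atTop_nat 2))
end

section
/- Let φ : ℝ/2πℤ → ℂ be a smooth function whose support is contained in the complement of {0, π}, and set w = inf{ 2|sin θ| : θ ∈ supp φ } (so w > 0). Then there is a constant C, independent of s, such that for all s ≥ 1: Σ over n ∈ ℤ with |n| ≤ w s / 4 of |∫_{T} e^{−i(nθ + 2s cos θ)} φ(θ) dσ(θ)|² ≤ C s^{−4}. -/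
open MeasureTheory Complex Real

noncomputable section

namespace OscAux

def aa (n : ℤ) (s : ℝ) (θ : ℝ) : ℂ := -Complex.I * (((n : ℝ) - 2*s*Real.sin θ : ℝ) : ℂ)
def aa1 (s : ℝ) (θ : ℝ) : ℂ := -Complex.I * (((-(2*s*Real.cos θ)) : ℝ) : ℂ)
def aa2 (s : ℝ) (θ : ℝ) : ℂ := -Complex.I * (((2*s*Real.sin θ) : ℝ) : ℂ)
def aa3 (s : ℝ) (θ : ℝ) : ℂ := -Complex.I * (((2*s*Real.cos θ) : ℝ) : ℂ)

def hh (n : ℤ) (s : ℝ) (θ : ℝ) : ℂ := (aa n s θ)⁻¹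
def hh1 (n : ℤ) (s : ℝ) (θ : ℝ) : ℂ := -(aa1 s θ) * (hh n s θ)^2
def hh2 (n : ℤ) (s : ℝ) (θ : ℝ) : ℂ :=
  -(aa2 s θ) * (hh n s θ)^2 - 2*(aa1 s θ)*(hh n s θ)*(hh1 n s θ)
def hh3 (n : ℤ) (s : ℝ) (θ : ℝ) : ℂ :=
  -(aa3 s θ) * (hh n s θ)^2 - 4*(aa2 s θ)*(hh n s θ)*(hh1 n s θ)
    - 2*(aa1 s θ)*(hh1 n s θ)^2 - 2*(aa1 s θ)*(hh n s θ)*(hh2 n s θ)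

def Ph (n : ℤ) (s : ℝ) (f : ℝ → ℂ) (θ : ℝ) : ℂ := f θ * hh n s θ
def Tf (n : ℤ) (s : ℝ) (f : ℝ → ℂ) : ℝ → ℂ := fun θ => -deriv (Ph n s f) θ

def Eph (n : ℤ) (s : ℝ) (θ : ℝ) : ℂ :=
  Complex.exp (-Complex.I * ((((n : ℤ) : ℝ) * θ + 2 * s * Real.cos θ : ℝ) : ℂ))

lemma hasDerivAt_aa (n : ℤ) (s : ℝ) (θ : ℝ) : HasDerivAt (aa n s) (aa1 s θ) θ := by
  have h1 : HasDerivAt (fun θ : ℝ => (n : ℝ) - 2*s*Real.sin θ) (-(2*s*Real.cos θ)) θ := by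
    simpa using ((Real.hasDerivAt_sin θ).const_mul (2*s)).const_sub (n : ℝ)
  exact (h1.ofReal_comp).const_mul (-Complex.I)

lemma hasDerivAt_aa1 (s : ℝ) (θ : ℝ) : HasDerivAt (aa1 s) (aa2 s θ) θ := by
  have h1 : HasDerivAt (fun θ : ℝ => -(2*s*Real.cos θ)) (2*s*Real.sin θ) θ := by
    exact (((Real.hasDerivAt_cos θ).const_mul (2*s)).neg).congr_deriv (by ring)
  exact (h1.ofReal_comp).const_mul (-Complex.I)

lemma hasDerivAt_aa2 (s : ℝ) (θ : ℝ) : HasDerivAt (aa2 s) (aa3 s θ) θ := by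
  have h1 : HasDerivAt (fun θ : ℝ => 2*s*Real.sin θ) (2*s*Real.cos θ) θ := by
    simpa using ((Real.hasDerivAt_sin θ).const_mul (2*s))
  exact (h1.ofReal_comp).const_mul (-Complex.I)

lemma norm_aa (n : ℤ) (s : ℝ) (θ : ℝ) : ‖aa n s θ‖ = |(n : ℝ) - 2*s*Real.sin θ| := by
  rw [aa, norm_mul, norm_neg, Complex.norm_I, one_mul, Complex.norm_real, Real.norm_eq_abs]

lemma norm_aa1 (s : ℝ) (θ : ℝ) (hs : 0 ≤ s) : ‖aa1 s θ‖ ≤ 2*s := by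
  rw [aa1, norm_mul, norm_neg, Complex.norm_I, one_mul, Complex.norm_real, Real.norm_eq_abs, abs_neg]
  rw [abs_le]
  constructor <;> nlinarith [Real.cos_le_one θ, Real.neg_one_le_cos θ, Real.sin_le_one θ, Real.neg_one_le_sin θ]

lemma norm_aa2 (s : ℝ) (θ : ℝ) (hs : 0 ≤ s) : ‖aa2 s θ‖ ≤ 2*s := by
  rw [aa2, norm_mul, norm_neg, Complex.norm_I, one_mul, Complex.norm_real, Real.norm_eq_abs]
  rw [abs_le]
  constructor <;> nlinarith [Real.cos_le_one θ, Real.neg_one_le_cos θ, Real.sin_le_one θ, Real.neg_one_le_sin θ]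

lemma norm_aa3 (s : ℝ) (θ : ℝ) (hs : 0 ≤ s) : ‖aa3 s θ‖ ≤ 2*s := by
  rw [aa3, norm_mul, norm_neg, Complex.norm_I, one_mul, Complex.norm_real, Real.norm_eq_abs]
  rw [abs_le]
  constructor <;> nlinarith [Real.cos_le_one θ, Real.neg_one_le_cos θ, Real.sin_le_one θ, Real.neg_one_le_sin θ]

end OscAux
open scoped ContDiff

namespace OscAux

variable {n : ℤ} {s : ℝ} {θ : ℝ}

lemma contDiff_aa (n : ℤ) (s : ℝ) : ContDiff ℝ ∞ (aa n s) := by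
  apply ContDiff.mul contDiff_const
  exact Complex.ofRealCLM.contDiff.comp
    (contDiff_const.sub (contDiff_const.mul Real.contDiff_sin))

lemma continuous_Eph (n : ℤ) (s : ℝ) : Continuous (Eph n s) := by
  unfold Eph; fun_prop

lemma hasDerivAt_Eph (n : ℤ) (s : ℝ) (θ : ℝ) :
    HasDerivAt (Eph n s) (aa n s θ * Eph n s θ) θ := by
  have hp : HasDerivAt (fun θ : ℝ => (n : ℝ) * θ + 2*s*Real.cos θ)
      ((n : ℝ) - 2*s*Real.sin θ) θ := by
    have h1 := (hasDerivAt_id θ).const_mul (n : ℝ)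
    have h2 := (Real.hasDerivAt_cos θ).const_mul (2*s)
    refine (h1.add h2).congr_deriv ?_
    ring
  have hz := (hp.ofReal_comp).const_mul (-Complex.I)
  have hexp := hz.cexp
  refine hexp.congr_deriv ?_
  rw [aa, Eph]
  push_cast
  ring

lemma hasDerivAt_hh (haθ : aa n s θ ≠ 0) : HasDerivAt (hh n s) (hh1 n s θ) θ := by
  have h : HasDerivAt (fun y => (1:ℂ) / aa n s y)
      ((0 * aa n s θ - 1 * aa1 s θ) / aa n s θ ^ 2) θ :=
    (hasDerivAt_const θ (1:ℂ)).div (hasDerivAt_aa n s θ) haθ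
  have heq : hh n s = fun y => (1:ℂ) / aa n s y := funext fun y => (one_div _).symm
  rw [heq]
  convert h using 1
  rw [hh1, hh]
  field_simp
  ring

lemma hasDerivAt_hh1 (haθ : aa n s θ ≠ 0) : HasDerivAt (hh1 n s) (hh2 n s θ) θ := by
  have hp := (hasDerivAt_hh haθ).mul (hasDerivAt_hh haθ)
  have h := ((hasDerivAt_aa1 s θ).neg).mul hp
  have heq : hh1 n s = fun y => -(aa1 s y) * (hh n s y * hh n s y) :=
    funext fun y => by rw [hh1]; ring
  rw [heq]
  refine h.congr_deriv ?_
  simp only [hh2, hh1, Pi.mul_apply, Pi.neg_apply]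
  ring

lemma hasDerivAt_hh2 (haθ : aa n s θ ≠ 0) : HasDerivAt (hh2 n s) (hh3 n s θ) θ := by
  have hp := (hasDerivAt_hh haθ).mul (hasDerivAt_hh haθ)
  have h1 := ((hasDerivAt_aa2 s θ).neg).mul hp
  have h2a := ((hasDerivAt_aa1 s θ).const_mul (2:ℂ)).mul (hasDerivAt_hh haθ)
  have h2 := h2a.mul (hasDerivAt_hh1 haθ)
  have h := h1.sub h2
  have heq : hh2 n s = fun y =>
      -(aa2 s y) * (hh n s y * hh n s y) - 2 * aa1 s y * hh n s y * hh1 n s y :=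
    funext fun y => by rw [hh2]; ring
  rw [heq]
  refine h.congr_deriv ?_
  simp only [hh3, hh2, hh1, Pi.mul_apply, Pi.neg_apply]
  ring

lemma periodic_aa (n : ℤ) (s : ℝ) : Function.Periodic (aa n s) (2*π) := by
  intro θ
  simp [aa, Real.sin_add_two_pi]

lemma periodic_hh (n : ℤ) (s : ℝ) : Function.Periodic (hh n s) (2*π) := by
  intro θ
  simp [hh, periodic_aa n s θ]

lemma periodic_deriv {f : ℝ → ℂ} (hf : Function.Periodic f (2*π)) :
    Function.Periodic (deriv f) (2*π) := by
  intro θ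
  have h : (fun x => f (x + 2*π)) = f := funext fun x => hf x
  calc deriv f (θ + 2*π) = deriv (fun x => f (x + 2*π)) θ :=
        (deriv_comp_add_const f (2*π) θ).symm
    _ = deriv f θ := by rw [h]

lemma contDiff_hh_at (haθ : aa n s θ ≠ 0) : ContDiffAt ℝ ∞ (hh n s) θ :=
  ((contDiff_aa n s).contDiffAt).inv haθ

lemma Ph_eventually_zero {f : ℝ → ℂ} (hθ : θ ∉ tsupport f) :
    Ph n s f =ᶠ[nhds θ] (fun _ => (0:ℂ)) := by
  have hmem : (tsupport f)ᶜ ∈ nhds θ := (isClosed_tsupport f).isOpen_compl.mem_nhds hθ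
  filter_upwards [hmem] with x hx
  simp [Ph, image_eq_zero_of_notMem_tsupport hx]

lemma contDiff_Ph {f : ℝ → ℂ} (hf : ContDiff ℝ ∞ f)
    (hA : ∀ θ ∈ tsupport f, aa n s θ ≠ 0) : ContDiff ℝ ∞ (Ph n s f) := by
  rw [contDiff_iff_contDiffAt]
  intro θ
  by_cases hθ : θ ∈ tsupport f
  · exact hf.contDiffAt.mul (contDiff_hh_at (hA θ hθ))
  · exact contDiffAt_const.congr_of_eventuallyEq (Ph_eventually_zero hθ)

lemma contDiff_Tf {f : ℝ → ℂ} (hf : ContDiff ℝ ∞ f)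
    (hA : ∀ θ ∈ tsupport f, aa n s θ ≠ 0) : ContDiff ℝ ∞ (Tf n s f) :=
  ((contDiff_infty_iff_deriv.1 (contDiff_Ph hf hA)).2).neg

lemma tsupport_Tf_subset (n : ℤ) (s : ℝ) (f : ℝ → ℂ) :
    tsupport (Tf n s f) ⊆ tsupport f := by
  apply closure_minimal ?_ (isClosed_tsupport f)
  intro θ hθ
  by_contra hc
  apply hθ
  have hev := Ph_eventually_zero (n := n) (s := s) (f := f) hc
  have hd : deriv (Ph n s f) θ = deriv (fun _ => (0:ℂ)) θ := hev.deriv_eq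
  show Tf n s f θ = 0
  simp [Tf, hd]

lemma periodic_Tf {f : ℝ → ℂ} (hper : Function.Periodic f (2*π)) :
    Function.Periodic (Tf n s f) (2*π) := by
  have hPh : Function.Periodic (Ph n s f) (2*π) := by
    intro θ
    simp [Ph, hper θ, periodic_hh n s θ]
  intro θ
  simp [Tf, periodic_deriv hPh θ]

end OscAux
namespace OscAux

lemma one_le_inf : (1 : WithTop ℕ∞) ≤ ∞ := by
  exact_mod_cast (le_top : (1:ℕ∞) ≤ ⊤)

lemma isOpen_U (n : ℤ) (s : ℝ) : IsOpen {x : ℝ | aa n s x ≠ 0} :=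
  (contDiff_aa n s).continuous.isOpen_preimage _ isOpen_ne

lemma Tf_eq {f : ℝ → ℂ} (hf : ContDiff ℝ ∞ f) (haθ : aa n s θ ≠ 0) :
    Tf n s f θ = -(deriv f θ * hh n s θ + f θ * hh1 n s θ) := by
  have h := ((hf.differentiable (by simp)).differentiableAt.hasDerivAt).mul
    (hasDerivAt_hh haθ)
  show -deriv (fun y => f y * hh n s y) θ = _
  exact congrArg Neg.neg h.deriv

lemma deriv_Tf_eq {f : ℝ → ℂ} (hf : ContDiff ℝ ∞ f) (haθ : aa n s θ ≠ 0) :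
    deriv (Tf n s f) θ =
      -(deriv (deriv f) θ * hh n s θ + 2 * deriv f θ * hh1 n s θ + f θ * hh2 n s θ) := by
  have hdf : ContDiff ℝ ∞ (deriv f) := (contDiff_infty_iff_deriv.1 hf).2
  have hev : Tf n s f =ᶠ[nhds θ] fun x => -(deriv f x * hh n s x + f x * hh1 n s x) := by
    filter_upwards [(isOpen_U n s).mem_nhds haθ] with x hx
    exact Tf_eq hf hx
  rw [hev.deriv_eq]
  have hd1 : HasDerivAt (deriv f) (deriv (deriv f) θ) θ :=
    (hdf.differentiable (by simp)).differentiableAt.hasDerivAt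
  have hd0 : HasDerivAt f (deriv f θ) θ :=
    (hf.differentiable (by simp)).differentiableAt.hasDerivAt
  have h := ((hd1.mul (hasDerivAt_hh haθ)).add (hd0.mul (hasDerivAt_hh1 haθ))).neg
  have hd := h.deriv
  simp only [Pi.neg_def, Pi.add_def, Pi.mul_def] at hd
  rw [hd]
  ring

lemma deriv_deriv_Tf_eq {f : ℝ → ℂ} (hf : ContDiff ℝ ∞ f) (haθ : aa n s θ ≠ 0) :
    deriv (deriv (Tf n s f)) θ =
      -(deriv (deriv (deriv f)) θ * hh n s θ + 3 * deriv (deriv f) θ * hh1 n s θ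
        + 3 * deriv f θ * hh2 n s θ + f θ * hh3 n s θ) := by
  have hdf : ContDiff ℝ ∞ (deriv f) := (contDiff_infty_iff_deriv.1 hf).2
  have hddf : ContDiff ℝ ∞ (deriv (deriv f)) := (contDiff_infty_iff_deriv.1 hdf).2
  have hev : deriv (Tf n s f) =ᶠ[nhds θ] fun x =>
      -(deriv (deriv f) x * hh n s x + 2 * deriv f x * hh1 n s x + f x * hh2 n s x) := by
    filter_upwards [(isOpen_U n s).mem_nhds haθ] with x hx
    exact deriv_Tf_eq hf hx
  rw [hev.deriv_eq]
  have hd2 : HasDerivAt (deriv (deriv f)) (deriv (deriv (deriv f)) θ) θ :=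
    (hddf.differentiable (by simp)).differentiableAt.hasDerivAt
  have hd1 : HasDerivAt (deriv f) (deriv (deriv f) θ) θ :=
    (hdf.differentiable (by simp)).differentiableAt.hasDerivAt
  have hd0 : HasDerivAt f (deriv f θ) θ :=
    (hf.differentiable (by simp)).differentiableAt.hasDerivAt
  have h := (((hd2.mul (hasDerivAt_hh haθ)).add
      (((hd1.const_mul (2:ℂ)).mul (hasDerivAt_hh1 haθ)))).add
      (hd0.mul (hasDerivAt_hh2 haθ))).neg
  have heq : (fun x =>
      -(deriv (deriv f) x * hh n s x + 2 * deriv f x * hh1 n s x + f x * hh2 n s x))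
      = fun x => -((deriv (deriv f) x * hh n s x + (2 * deriv f x) * hh1 n s x)
          + f x * hh2 n s x) := by
    funext x; ring
  have hd := h.deriv
  simp only [Pi.neg_def, Pi.add_def, Pi.mul_def] at hd
  rw [heq, hd]
  ring

lemma ibp {f : ℝ → ℂ} {n : ℤ} {s : ℝ} (hf : ContDiff ℝ ∞ f)
    (hper : Function.Periodic f (2*π))
    (hA : ∀ θ ∈ tsupport f, aa n s θ ≠ 0) :
    ∫ θ in Set.Ioc 0 (2*π), Eph n s θ * f θ
      = ∫ θ in Set.Ioc 0 (2*π), Eph n s θ * Tf n s f θ := by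
  have h2π : (0:ℝ) ≤ 2*π := by positivity
  rw [← intervalIntegral.integral_of_le h2π, ← intervalIntegral.integral_of_le h2π]
  have hPh := contDiff_Ph hf hA
  have hu : ∀ x ∈ Set.uIcc (0:ℝ) (2*π), HasDerivAt (Ph n s f) (deriv (Ph n s f) x) x :=
    fun x _ => (hPh.differentiable (by simp)).differentiableAt.hasDerivAt
  have hv : ∀ x ∈ Set.uIcc (0:ℝ) (2*π), HasDerivAt (Eph n s) (aa n s x * Eph n s x) x :=
    fun x _ => hasDerivAt_Eph n s x
  have hu' : IntervalIntegrable (deriv (Ph n s f)) volume 0 (2*π) :=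
    (hPh.continuous_deriv one_le_inf).intervalIntegrable _ _
  have hv' : IntervalIntegrable (fun x => aa n s x * Eph n s x) volume 0 (2*π) :=
    ((contDiff_aa n s).continuous.mul (continuous_Eph n s)).intervalIntegrable _ _
  have key := intervalIntegral.integral_mul_deriv_eq_deriv_mul hu hv hu' hv'
  have hlhs : (∫ x in (0:ℝ)..(2*π), Ph n s f x * (aa n s x * Eph n s x))
      = ∫ x in (0:ℝ)..(2*π), Eph n s x * f x := by
    apply intervalIntegral.integral_congr
    intro x _
    by_cases hx : aa n s x = 0
    · have hxs : x ∉ tsupport f := fun hmem => (hA x hmem) hx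
      simp [Ph, image_eq_zero_of_notMem_tsupport hxs]
    · simp only [Ph, hh]
      field_simp
  have hPhper : Function.Periodic (Ph n s f) (2*π) := by
    intro θ
    simp [Ph, hper θ, periodic_hh n s θ]
  have hbPh : Ph n s f (2*π) = Ph n s f 0 := by
    simpa using hPhper 0
  have hbE : Eph n s (2*π) = Eph n s 0 := by
    rw [Eph, Eph, Real.cos_two_pi, Real.cos_zero]
    rw [show ((-Complex.I) * ((((n:ℤ):ℝ)*(2*π) + 2*s*1 : ℝ):ℂ))
        = ((-n : ℤ) : ℂ) * (2*π*Complex.I) + (-Complex.I * ((((n:ℤ):ℝ)*0 + 2*s*1 : ℝ):ℂ)) from by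
      push_cast; ring]
    rw [Complex.exp_add, Complex.exp_int_mul_two_pi_mul_I, one_mul]
  have hrhs : (∫ x in (0:ℝ)..(2*π), Eph n s x * Tf n s f x)
      = -∫ x in (0:ℝ)..(2*π), deriv (Ph n s f) x * Eph n s x := by
    rw [← intervalIntegral.integral_neg]
    apply intervalIntegral.integral_congr
    intro x _
    simp only [Tf]
    ring
  rw [hrhs, ← hlhs, key, hbPh, hbE]
  ring
end OscAux
namespace OscAux

variable {n : ℤ} {s θ A : ℝ}

lemma hh_bound0 (hs : 1 ≤ s) (hA : 0 < A) (hlow : A*s ≤ ‖aa n s θ‖) :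
    s * ‖hh n s θ‖ ≤ 1/A := by
  have hs0 : (0:ℝ) < s := by linarith
  have hpos : (0:ℝ) < A*s := by positivity
  have h1 : ‖aa n s θ‖⁻¹ ≤ (A*s)⁻¹ := by
    apply inv_anti₀ hpos hlow
  have h2 : s * ‖aa n s θ‖⁻¹ ≤ s * (A*s)⁻¹ := by
    exact mul_le_mul_of_nonneg_left h1 hs0.le
  rw [hh, norm_inv]
  calc s * ‖aa n s θ‖⁻¹ ≤ s * (A*s)⁻¹ := h2
    _ = 1/A := by field_simp [mul_comm]

lemma hh_bound1 (hs : 1 ≤ s) (hA : 0 < A) (hlow : A*s ≤ ‖aa n s θ‖) :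
    s * ‖hh1 n s θ‖ ≤ 2*(1/A)^2 := by
  have hs0 : (0:ℝ) < s := by linarith
  set u := ‖hh n s θ‖ with hu
  have hu0 : 0 ≤ u := norm_nonneg _
  have e0 : s * u ≤ 1/A := hh_bound0 hs hA hlow
  have ha1 : ‖aa1 s θ‖ ≤ 2*s := norm_aa1 s θ (by linarith)
  have heq : ‖hh1 n s θ‖ = ‖aa1 s θ‖ * u^2 := by
    rw [hh1, norm_mul, norm_neg, norm_pow]
  rw [heq]
  have h1 : ‖aa1 s θ‖ * u^2 ≤ 2*s*u^2 :=
    mul_le_mul_of_nonneg_right ha1 (sq_nonneg u)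
  have h2 : s * (‖aa1 s θ‖ * u^2) ≤ s * (2*s*u^2) :=
    mul_le_mul_of_nonneg_left h1 hs0.le
  nlinarith [mul_self_le_mul_self (by positivity : (0:ℝ) ≤ s*u) e0]

lemma hh_bound2 (hs : 1 ≤ s) (hA : 0 < A) (hlow : A*s ≤ ‖aa n s θ‖) :
    s * ‖hh2 n s θ‖ ≤ 2*(1/A)^2 + 8*(1/A)^3 := by
  have hs0 : (0:ℝ) < s := by linarith
  set u := ‖hh n s θ‖ with hu
  set v := ‖hh1 n s θ‖ with hv
  have hu0 : 0 ≤ u := norm_nonneg _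
  have hv0 : 0 ≤ v := norm_nonneg _
  have e0 : s * u ≤ 1/A := hh_bound0 hs hA hlow
  have e1 : s * v ≤ 2*(1/A)^2 := hh_bound1 hs hA hlow
  have ha1 : ‖aa1 s θ‖ ≤ 2*s := norm_aa1 s θ (by linarith)
  have ha2 : ‖aa2 s θ‖ ≤ 2*s := norm_aa2 s θ (by linarith)
  have t1 : ‖-(aa2 s θ) * (hh n s θ) ^ 2‖ = ‖aa2 s θ‖ * u^2 := by
    rw [norm_mul, norm_neg, norm_pow]
  have t2 : ‖2 * aa1 s θ * hh n s θ * hh1 n s θ‖ = 2*‖aa1 s θ‖*u*v := by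
    rw [norm_mul, norm_mul, norm_mul, Complex.norm_ofNat]
  have htri : ‖hh2 n s θ‖ ≤ ‖aa2 s θ‖ * u^2 + 2*‖aa1 s θ‖*u*v := by
    rw [hh2]
    refine (norm_sub_le _ _).trans ?_
    rw [t1, t2]
  have h2 : s * ‖hh2 n s θ‖ ≤ s * (‖aa2 s θ‖ * u^2 + 2*‖aa1 s θ‖*u*v) :=
    mul_le_mul_of_nonneg_left htri hs0.le
  nlinarith [mul_self_le_mul_self (by positivity : (0:ℝ) ≤ s*u) e0,
    mul_le_mul (mul_le_mul_of_nonneg_left ha2 (sq_nonneg u)) (le_refl (1:ℝ)) zero_le_one (by positivity),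
    mul_le_mul e0 e1 (by positivity) (by positivity : (0:ℝ) ≤ 1/A),
    mul_le_mul_of_nonneg_right ha1 (mul_nonneg hu0 hv0),
    mul_le_mul_of_nonneg_right ha2 (sq_nonneg u)]

lemma hh_bound3 (hs : 1 ≤ s) (hA : 0 < A) (hlow : A*s ≤ ‖aa n s θ‖) :
    s * ‖hh3 n s θ‖ ≤ 2*(1/A)^2 + 24*(1/A)^3 + 48*(1/A)^4 := by
  have hs0 : (0:ℝ) < s := by linarith
  set u := ‖hh n s θ‖ with hu
  set v := ‖hh1 n s θ‖ with hv
  set w := ‖hh2 n s θ‖ with hw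
  have hu0 : 0 ≤ u := norm_nonneg _
  have hv0 : 0 ≤ v := norm_nonneg _
  have hw0 : 0 ≤ w := norm_nonneg _
  have e0 : s * u ≤ 1/A := hh_bound0 hs hA hlow
  have e1 : s * v ≤ 2*(1/A)^2 := hh_bound1 hs hA hlow
  have e2 : s * w ≤ 2*(1/A)^2 + 8*(1/A)^3 := hh_bound2 hs hA hlow
  have ha1 : ‖aa1 s θ‖ ≤ 2*s := norm_aa1 s θ (by linarith)
  have ha2 : ‖aa2 s θ‖ ≤ 2*s := norm_aa2 s θ (by linarith)
  have ha3 : ‖aa3 s θ‖ ≤ 2*s := norm_aa3 s θ (by linarith)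
  have n1 : ‖-(aa3 s θ) * (hh n s θ) ^ 2‖ = ‖aa3 s θ‖ * u^2 := by
    rw [norm_mul, norm_neg, norm_pow]
  have n2 : ‖4 * aa2 s θ * hh n s θ * hh1 n s θ‖ = 4*‖aa2 s θ‖*u*v := by
    rw [norm_mul, norm_mul, norm_mul, Complex.norm_ofNat]
  have n3 : ‖2 * aa1 s θ * (hh1 n s θ)^2‖ = 2*‖aa1 s θ‖*v^2 := by
    rw [norm_mul, norm_mul, norm_pow, Complex.norm_ofNat]
  have n4 : ‖2 * aa1 s θ * hh n s θ * hh2 n s θ‖ = 2*‖aa1 s θ‖*u*w := by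
    rw [norm_mul, norm_mul, norm_mul, Complex.norm_ofNat]
  have htri : ‖hh3 n s θ‖ ≤
      ‖aa3 s θ‖ * u^2 + 4*‖aa2 s θ‖*u*v + 2*‖aa1 s θ‖*v^2 + 2*‖aa1 s θ‖*u*w := by
    rw [hh3]
    refine le_trans ((norm_sub_le _ _).trans (add_le_add
      ((norm_sub_le _ _).trans (add_le_add
        ((norm_sub_le _ _).trans (add_le_add (le_of_eq n1) (le_of_eq n2)))
        (le_of_eq n3)))
      (le_of_eq n4))) ?_
    exact le_of_eq (by ring)
  have h2 : s * ‖hh3 n s θ‖ ≤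
      s * (‖aa3 s θ‖ * u^2 + 4*‖aa2 s θ‖*u*v + 2*‖aa1 s θ‖*v^2 + 2*‖aa1 s θ‖*u*w) :=
    mul_le_mul_of_nonneg_left htri hs0.le
  have hB : (0:ℝ) ≤ 1/A := by positivity
  nlinarith [mul_self_le_mul_self (by positivity : (0:ℝ) ≤ s*u) e0,
    mul_self_le_mul_self (by positivity : (0:ℝ) ≤ s*v) e1,
    mul_le_mul e0 e1 (by positivity) hB,
    mul_le_mul e0 e2 (by positivity) hB,
    mul_le_mul_of_nonneg_right ha3 (sq_nonneg u),
    mul_le_mul_of_nonneg_right ha2 (mul_nonneg hu0 hv0),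
    mul_le_mul_of_nonneg_right ha1 (sq_nonneg v),
    mul_le_mul_of_nonneg_right ha1 (mul_nonneg hu0 hw0)]

end OscAux
namespace OscAux

variable {n : ℤ} {s θ : ℝ}

lemma norm_Tf_le {f : ℝ → ℂ} (hf : ContDiff ℝ ∞ f) (haθ : aa n s θ ≠ 0)
    {Mf c0 c1 c2 c3 : ℝ} (hMf : 0 ≤ Mf) (hc0 : 0 ≤ c0) (hc1 : 0 ≤ c1) (hc2 : 0 ≤ c2)
    (hc3 : 0 ≤ c3) (hs0 : 0 < s)
    (e0 : s * ‖hh n s θ‖ ≤ c0) (e1 : s * ‖hh1 n s θ‖ ≤ c1)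
    (h0 : ‖f θ‖ ≤ Mf) (h1 : ‖deriv f θ‖ ≤ Mf) :
    s * ‖Tf n s f θ‖ ≤ Mf * (c0 + 3*c1 + 3*c2 + c3) := by
  rw [Tf_eq hf haθ]
  have tri : ‖-(deriv f θ * hh n s θ + f θ * hh1 n s θ)‖
      ≤ ‖deriv f θ‖ * ‖hh n s θ‖ + ‖f θ‖ * ‖hh1 n s θ‖ := by
    rw [norm_neg]
    exact (norm_add_le _ _).trans (by rw [norm_mul, norm_mul])
  have h2 := mul_le_mul_of_nonneg_left tri hs0.le
  have g1 : ‖deriv f θ‖ * (s * ‖hh n s θ‖) ≤ Mf * c0 :=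
    mul_le_mul h1 e0 (by positivity) hMf
  have g2 : ‖f θ‖ * (s * ‖hh1 n s θ‖) ≤ Mf * c1 :=
    mul_le_mul h0 e1 (by positivity) hMf
  nlinarith [mul_nonneg hMf hc1, mul_nonneg hMf hc2, mul_nonneg hMf hc3]

lemma norm_deriv_Tf_le {f : ℝ → ℂ} (hf : ContDiff ℝ ∞ f) (haθ : aa n s θ ≠ 0)
    {Mf c0 c1 c2 c3 : ℝ} (hMf : 0 ≤ Mf) (hc0 : 0 ≤ c0) (hc1 : 0 ≤ c1) (hc2 : 0 ≤ c2)
    (hc3 : 0 ≤ c3) (hs0 : 0 < s)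
    (e0 : s * ‖hh n s θ‖ ≤ c0) (e1 : s * ‖hh1 n s θ‖ ≤ c1) (e2 : s * ‖hh2 n s θ‖ ≤ c2)
    (h0 : ‖f θ‖ ≤ Mf) (h1 : ‖deriv f θ‖ ≤ Mf) (h2 : ‖deriv (deriv f) θ‖ ≤ Mf) :
    s * ‖deriv (Tf n s f) θ‖ ≤ Mf * (c0 + 3*c1 + 3*c2 + c3) := by
  rw [deriv_Tf_eq hf haθ]
  have t2 : ‖2 * deriv f θ * hh1 n s θ‖ = 2 * ‖deriv f θ‖ * ‖hh1 n s θ‖ := by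
    rw [norm_mul, norm_mul, Complex.norm_ofNat]
  have tri : ‖-(deriv (deriv f) θ * hh n s θ + 2 * deriv f θ * hh1 n s θ + f θ * hh2 n s θ)‖
      ≤ ‖deriv (deriv f) θ‖ * ‖hh n s θ‖ + 2 * ‖deriv f θ‖ * ‖hh1 n s θ‖
        + ‖f θ‖ * ‖hh2 n s θ‖ := by
    rw [norm_neg]
    refine (norm_add_le _ _).trans ?_
    refine add_le_add ((norm_add_le _ _).trans (add_le_add (le_of_eq (norm_mul _ _))
      (le_of_eq t2))) (le_of_eq (norm_mul _ _))
  have hmul := mul_le_mul_of_nonneg_left tri hs0.le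
  have g1 : ‖deriv (deriv f) θ‖ * (s * ‖hh n s θ‖) ≤ Mf * c0 :=
    mul_le_mul h2 e0 (by positivity) hMf
  have g2 : ‖deriv f θ‖ * (s * ‖hh1 n s θ‖) ≤ Mf * c1 :=
    mul_le_mul h1 e1 (by positivity) hMf
  have g3 : ‖f θ‖ * (s * ‖hh2 n s θ‖) ≤ Mf * c2 :=
    mul_le_mul h0 e2 (by positivity) hMf
  nlinarith [mul_nonneg hMf hc1, mul_nonneg hMf hc2, mul_nonneg hMf hc3]

lemma norm_dd_Tf_le {f : ℝ → ℂ} (hf : ContDiff ℝ ∞ f) (haθ : aa n s θ ≠ 0)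
    {Mf c0 c1 c2 c3 : ℝ} (hMf : 0 ≤ Mf) (hc0 : 0 ≤ c0) (hc1 : 0 ≤ c1) (hc2 : 0 ≤ c2)
    (hc3 : 0 ≤ c3) (hs0 : 0 < s)
    (e0 : s * ‖hh n s θ‖ ≤ c0) (e1 : s * ‖hh1 n s θ‖ ≤ c1) (e2 : s * ‖hh2 n s θ‖ ≤ c2)
    (e3 : s * ‖hh3 n s θ‖ ≤ c3)
    (h0 : ‖f θ‖ ≤ Mf) (h1 : ‖deriv f θ‖ ≤ Mf) (h2 : ‖deriv (deriv f) θ‖ ≤ Mf)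
    (h3 : ‖deriv (deriv (deriv f)) θ‖ ≤ Mf) :
    s * ‖deriv (deriv (Tf n s f)) θ‖ ≤ Mf * (c0 + 3*c1 + 3*c2 + c3) := by
  rw [deriv_deriv_Tf_eq hf haθ]
  have t2 : ‖3 * deriv (deriv f) θ * hh1 n s θ‖
      = 3 * ‖deriv (deriv f) θ‖ * ‖hh1 n s θ‖ := by
    rw [norm_mul, norm_mul, Complex.norm_ofNat]
  have t3 : ‖3 * deriv f θ * hh2 n s θ‖ = 3 * ‖deriv f θ‖ * ‖hh2 n s θ‖ := by
    rw [norm_mul, norm_mul, Complex.norm_ofNat]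
  have tri : ‖-(deriv (deriv (deriv f)) θ * hh n s θ + 3 * deriv (deriv f) θ * hh1 n s θ
      + 3 * deriv f θ * hh2 n s θ + f θ * hh3 n s θ)‖
      ≤ ‖deriv (deriv (deriv f)) θ‖ * ‖hh n s θ‖ + 3 * ‖deriv (deriv f) θ‖ * ‖hh1 n s θ‖
        + 3 * ‖deriv f θ‖ * ‖hh2 n s θ‖ + ‖f θ‖ * ‖hh3 n s θ‖ := by
    rw [norm_neg]
    refine (norm_add_le _ _).trans ?_
    refine add_le_add ((norm_add_le _ _).trans (add_le_add ((norm_add_le _ _).trans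
      (add_le_add (le_of_eq (norm_mul _ _)) (le_of_eq t2))) (le_of_eq t3)))
      (le_of_eq (norm_mul _ _))
  have hmul := mul_le_mul_of_nonneg_left tri hs0.le
  have g1 : ‖deriv (deriv (deriv f)) θ‖ * (s * ‖hh n s θ‖) ≤ Mf * c0 :=
    mul_le_mul h3 e0 (by positivity) hMf
  have g2 : ‖deriv (deriv f) θ‖ * (s * ‖hh1 n s θ‖) ≤ Mf * c1 :=
    mul_le_mul h2 e1 (by positivity) hMf
  have g3 : ‖deriv f θ‖ * (s * ‖hh2 n s θ‖) ≤ Mf * c2 :=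
    mul_le_mul h1 e2 (by positivity) hMf
  have g4 : ‖f θ‖ * (s * ‖hh3 n s θ‖) ≤ Mf * c3 :=
    mul_le_mul h0 e3 (by positivity) hMf
  nlinarith [mul_nonneg hMf hc1, mul_nonneg hMf hc2, mul_nonneg hMf hc3]

lemma exists_bound_of_periodic {g : ℝ → ℂ} (hc : Continuous g)
    (hper : Function.Periodic g (2*π)) :
    ∃ M, 0 ≤ M ∧ ∀ θ, ‖g θ‖ ≤ M := by
  obtain ⟨C, hC⟩ := (isCompact_Icc (a := (0:ℝ))
    (b := 2*π)).exists_bound_of_continuousOn hc.continuousOn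
  refine ⟨max C 0, le_max_right _ _, fun θ => ?_⟩
  have hmem : g θ ∈ g '' Set.Icc 0 (0 + 2*π) := by
    rw [hper.image_Icc (by positivity) 0]
    exact Set.mem_range_self θ
  obtain ⟨x, hx, hxe⟩ := hmem
  rw [← hxe]
  exact (hC x (by simpa using hx)).trans (le_max_left _ _)

end OscAux
namespace OscAux

def DD (A : ℝ) : ℝ :=
  1/A + 3*(2*(1/A)^2) + 3*(2*(1/A)^2 + 8*(1/A)^3) + (2*(1/A)^2 + 24*(1/A)^3 + 48*(1/A)^4)

lemma norm_Eph (n : ℤ) (s θ : ℝ) : ‖Eph n s θ‖ = 1 := by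
  simp [Eph, Complex.norm_exp]

lemma main_est {φ : ℝ → ℂ} (hφsm : ContDiff ℝ ∞ φ) (hφper : Function.Periodic φ (2*π))
    {A M : ℝ} (hA : 0 < A) (hM : 0 ≤ M)
    (hM0 : ∀ θ, ‖φ θ‖ ≤ M) (hM1 : ∀ θ, ‖deriv φ θ‖ ≤ M)
    (hM2 : ∀ θ, ‖deriv (deriv φ) θ‖ ≤ M) (hM3 : ∀ θ, ‖deriv (deriv (deriv φ)) θ‖ ≤ M)
    {n : ℤ} {s : ℝ} (hs : 1 ≤ s) (hlow : ∀ θ ∈ tsupport φ, A * s ≤ ‖aa n s θ‖) :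
    ‖∫ θ in Set.Ioc (0:ℝ) (2*π), Eph n s θ * φ θ‖ ≤ (2*π) * (M * (DD A)^3) / s^3 := by
  have hs0 : (0:ℝ) < s := lt_of_lt_of_le one_pos hs
  have hAne : ∀ θ ∈ tsupport φ, aa n s θ ≠ 0 := by
    intro θ hθ h0
    have hl := hlow θ hθ
    rw [h0, norm_zero] at hl
    nlinarith
  have hg1sm := contDiff_Tf hφsm hAne
  have hg1per := periodic_Tf (n := n) (s := s) hφper
  have hsub1 := tsupport_Tf_subset n s φ
  have hAne1 : ∀ θ ∈ tsupport (Tf n s φ), aa n s θ ≠ 0 := fun θ h => hAne θ (hsub1 h)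
  have hg2sm := contDiff_Tf hg1sm hAne1
  have hg2per := periodic_Tf (n := n) (s := s) hg1per
  have hsub2 := tsupport_Tf_subset n s (Tf n s φ)
  have hAne2 : ∀ θ ∈ tsupport (Tf n s (Tf n s φ)), aa n s θ ≠ 0 :=
    fun θ h => hAne1 θ (hsub2 h)
  have hg3sm := contDiff_Tf hg2sm hAne2
  have hsub3 := tsupport_Tf_subset n s (Tf n s (Tf n s φ))
  have hi1 := ibp hφsm hφper hAne
  have hi2 := ibp hg1sm hg1per hAne1
  have hi3 := ibp hg2sm hg2per hAne2
  rw [hi1, hi2, hi3]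
  have hDpos : 0 < DD A := by rw [DD]; positivity
  have hbound : ∀ x, ‖Tf n s (Tf n s (Tf n s φ)) x‖ ≤ M * (DD A)^3 / s^3 := by
    intro x
    by_cases hx : x ∈ tsupport φ
    · have haθ := hAne x hx
      have e0 := hh_bound0 hs hA (hlow x hx)
      have e1 := hh_bound1 hs hA (hlow x hx)
      have e2 := hh_bound2 hs hA (hlow x hx)
      have e3 := hh_bound3 hs hA (hlow x hx)
      have hc0 : (0:ℝ) ≤ 1/A := by positivity
      have hc1 : (0:ℝ) ≤ 2*(1/A)^2 := by positivity
      have hc2 : (0:ℝ) ≤ 2*(1/A)^2 + 8*(1/A)^3 := by positivity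
      have hc3' : (0:ℝ) ≤ 2*(1/A)^2 + 24*(1/A)^3 + 48*(1/A)^4 := by positivity
      have hDD : (1/A) + 3*(2*(1/A)^2) + 3*(2*(1/A)^2 + 8*(1/A)^3)
          + (2*(1/A)^2 + 24*(1/A)^3 + 48*(1/A)^4) = DD A := by rw [DD]
      have b10 := norm_Tf_le hφsm haθ hM hc0 hc1 hc2 hc3' hs0 e0 e1 (hM0 x) (hM1 x)
      have b11 := norm_deriv_Tf_le hφsm haθ hM hc0 hc1 hc2 hc3' hs0 e0 e1 e2
        (hM0 x) (hM1 x) (hM2 x)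
      have b12 := norm_dd_Tf_le hφsm haθ hM hc0 hc1 hc2 hc3' hs0 e0 e1 e2 e3
        (hM0 x) (hM1 x) (hM2 x) (hM3 x)
      rw [hDD] at b10 b11 b12
      have hMf1 : (0:ℝ) ≤ M * DD A / s := by positivity
      have c10 : ‖Tf n s φ x‖ ≤ M * DD A / s := by
        rw [le_div_iff₀ hs0]; linarith
      have c11 : ‖deriv (Tf n s φ) x‖ ≤ M * DD A / s := by
        rw [le_div_iff₀ hs0]; linarith
      have c12 : ‖deriv (deriv (Tf n s φ)) x‖ ≤ M * DD A / s := by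
        rw [le_div_iff₀ hs0]; linarith
      have b20 := norm_Tf_le hg1sm haθ hMf1 hc0 hc1 hc2 hc3' hs0 e0 e1 c10 c11
      have b21 := norm_deriv_Tf_le hg1sm haθ hMf1 hc0 hc1 hc2 hc3' hs0 e0 e1 e2 c10 c11 c12
      rw [hDD] at b20 b21
      have hMf2 : (0:ℝ) ≤ M * DD A / s * DD A / s := by positivity
      have c20 : ‖Tf n s (Tf n s φ) x‖ ≤ M * DD A / s * DD A / s := by
        rw [le_div_iff₀ hs0]; linarith
      have c21 : ‖deriv (Tf n s (Tf n s φ)) x‖ ≤ M * DD A / s * DD A / s := by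
        rw [le_div_iff₀ hs0]; linarith
      have b30 := norm_Tf_le hg2sm haθ hMf2 hc0 hc1 hc2 hc3' hs0 e0 e1 c20 c21
      rw [hDD] at b30
      have hb : s * ‖Tf n s (Tf n s (Tf n s φ)) x‖ ≤ M * (DD A)^3 / s^2 := by
        refine b30.trans (le_of_eq ?_)
        field_simp
      rw [le_div_iff₀ (by positivity : (0:ℝ) < s^3)]
      have hmul := mul_le_mul_of_nonneg_left hb (by positivity : (0:ℝ) ≤ s^2)
      calc ‖Tf n s (Tf n s (Tf n s φ)) x‖ * s^3
          = s^2 * (s * ‖Tf n s (Tf n s (Tf n s φ)) x‖) := by ring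
        _ ≤ s^2 * (M * (DD A)^3 / s^2) := hmul
        _ = M * (DD A)^3 := by field_simp
    · have hx3 : x ∉ tsupport (Tf n s (Tf n s (Tf n s φ))) :=
        fun h => hx (hsub1 (hsub2 (hsub3 h)))
      rw [image_eq_zero_of_notMem_tsupport hx3, norm_zero]
      exact div_nonneg (mul_nonneg hM (pow_nonneg hDpos.le 3)) (by positivity)
  have hvol : (volume (Set.Ioc (0:ℝ) (2*π))).toReal = 2*π := by
    rw [Real.volume_Ioc, ENNReal.toReal_ofReal (by nlinarith [Real.pi_pos])]
    ring
  have hvollt : volume (Set.Ioc (0:ℝ) (2*π)) < ⊤ := by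
    rw [Real.volume_Ioc]
    exact ENNReal.ofReal_lt_top
  have hmeas : AEStronglyMeasurable (fun θ => Eph n s θ * Tf n s (Tf n s (Tf n s φ)) θ)
      (volume.restrict (Set.Ioc (0:ℝ) (2*π))) :=
    ((continuous_Eph n s).mul (contDiff_Tf hg2sm hAne2).continuous).aestronglyMeasurable
  have hint := norm_setIntegral_le_of_norm_le_const
    (f := fun θ => Eph n s θ * Tf n s (Tf n s (Tf n s φ)) θ) (C := M * (DD A)^3 / s^3) hvollt
    (fun x _ => by
      rw [norm_mul, norm_Eph, one_mul]
      exact hbound x)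
  rw [measureReal_def, hvol] at hint
  calc ‖∫ θ in Set.Ioc (0:ℝ) (2*π), Eph n s θ * Tf n s (Tf n s (Tf n s φ)) θ‖
      ≤ M * (DD A)^3 / s^3 * (2*π) := hint
    _ = (2*π) * (M * (DD A)^3) / s^3 := by ring

end OscAux
namespace OscAux

lemma tsupport_shift {f : ℝ → ℂ} {c : ℝ} (hper : Function.Periodic f c) {θ : ℝ}
    (hθ : θ ∈ tsupport f) : θ + c ∈ tsupport f := by
  have himg : (Homeomorph.addRight c) '' (Function.support f) = Function.support f := by
    ext x
    simp only [Set.mem_image, Function.mem_support]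
    constructor
    · rintro ⟨y, hy, rfl⟩
      show f (y + c) ≠ 0
      rw [hper y]
      exact hy
    · intro hx
      refine ⟨x - c, ?_, by simp⟩
      have h2 := hper (x - c)
      rw [show x - c + c = x by ring] at h2
      rw [← h2]
      exact hx
  have hmem : θ + c ∈ (Homeomorph.addRight c) '' (closure (Function.support f)) :=
    ⟨θ, hθ, by simp⟩
  rw [(Homeomorph.addRight c).image_closure, himg] at hmem
  exact hmem

lemma reduce {f : ℝ → ℂ} (hper : Function.Periodic f (2*π)) {θ : ℝ}
    (hθ : θ ∈ tsupport f) :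
    ∃ θ', θ' ∈ tsupport f ∧ θ' ∈ Set.Icc 0 (2*π) ∧ Real.sin θ' = Real.sin θ := by
  have hπ : (0:ℝ) < 2*π := by positivity
  set k := ⌊θ / (2*π)⌋ with hk
  refine ⟨θ - 2*π*k, ?_, ?_, ?_⟩
  · have hkper : Function.Periodic f (((-k : ℤ) : ℝ) * (2*π)) := hper.int_mul (-k)
    have := tsupport_shift hkper hθ
    rw [show θ + ((-k : ℤ) : ℝ) * (2*π) = θ - 2*π*k by push_cast; ring] at this
    exact this
  · constructor
    · have h1 : (k : ℝ) ≤ θ / (2*π) := Int.floor_le _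
      have := mul_le_mul_of_nonneg_left h1 hπ.le
      rw [mul_div_cancel₀ _ hπ.ne'] at this
      linarith
    · have h2 : θ / (2*π) < k + 1 := Int.lt_floor_add_one _
      have := mul_lt_mul_of_pos_left h2 hπ
      rw [mul_div_cancel₀ _ hπ.ne'] at this
      linarith
  · have := (Real.sin_periodic.int_mul k) (θ - 2*π*k)
    rw [show θ - 2*π*k + (k:ℝ)*(2*π) = θ by ring] at this
    exact this.symm

lemma sin_ne_zero_of_hsupp {θ : ℝ}
    (h1 : ∀ k : ℤ, θ ≠ 2 * π * k) (h2 : ∀ k : ℤ, θ ≠ π + 2 * π * k) :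
    Real.sin θ ≠ 0 := by
  intro h
  rw [Real.sin_eq_zero_iff] at h
  obtain ⟨k, hk⟩ := h
  rcases Int.even_or_odd k with ⟨m, hm⟩ | ⟨m, hm⟩
  · exact h1 m (by rw [← hk, hm]; push_cast; ring)
  · exact h2 m (by rw [← hk, hm]; push_cast; ring)

end OscAux
/-- Let `φ` be a smooth function on the circle `T = ℝ/2πℤ` whose support
avoids the points `0` and `π`, and let `w = inf{ 2|sin θ| : θ ∈ supp φ }`.  Then there is a
constant `C` such that for all `s ≥ 1`,
`∑_{|n| ≤ ws/4} |∫_T e^{−i(nθ + 2s cos θ)} φ(θ) dσ(θ)|² ≤ C s^{−4}`. -/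
theorem oscillatory_integral_estimate_circle
    (φ : ℝ → ℂ)
    (hφper : Function.Periodic φ (2 * π))
    (hφsm : ContDiff ℝ (⊤ : ℕ∞) φ)
    (hsupp : ∀ θ ∈ tsupport φ,
      (∀ k : ℤ, θ ≠ 2 * π * k) ∧ (∀ k : ℤ, θ ≠ π + 2 * π * k)) :
    ∃ C : ℝ, ∀ s : ℝ, 1 ≤ s →
      ∑' n : { m : ℤ //
          |(m : ℝ)| ≤ sInf ((fun θ : ℝ => 2 * |Real.sin θ|) '' tsupport φ) * s / 4 },
        ‖(1 / (2 * π) : ℝ) •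
          ∫ θ in Set.Ioc (0 : ℝ) (2 * π),
            Complex.exp (-Complex.I * ((((n : ℤ) : ℝ) * θ + 2 * s * Real.cos θ : ℝ) : ℂ)) *
              φ θ‖ ^ 2
        ≤ C / s ^ 4 := by
  classical
  by_cases hSne : tsupport φ = ∅
  · refine ⟨0, fun s hs => ?_⟩
    have hφ0 : ∀ θ, φ θ = 0 := fun θ =>
      image_eq_zero_of_notMem_tsupport (by simp [hSne])
    simp [hφ0]
  · have hφ8 : ContDiff ℝ ∞ φ := hφsm.of_le (by simp)
    have hd1 : ContDiff ℝ ∞ (deriv φ) := (contDiff_infty_iff_deriv.1 hφ8).2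
    have hd2 : ContDiff ℝ ∞ (deriv (deriv φ)) := (contDiff_infty_iff_deriv.1 hd1).2
    have hd3 : ContDiff ℝ ∞ (deriv (deriv (deriv φ))) := (contDiff_infty_iff_deriv.1 hd2).2
    have hp1 : Function.Periodic (deriv φ) (2*π) := OscAux.periodic_deriv hφper
    have hp2 : Function.Periodic (deriv (deriv φ)) (2*π) := OscAux.periodic_deriv hp1
    have hp3 : Function.Periodic (deriv (deriv (deriv φ))) (2*π) := OscAux.periodic_deriv hp2
    obtain ⟨M0, hM0n, hM0⟩ := OscAux.exists_bound_of_periodic hφ8.continuous hφper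
    obtain ⟨M1, hM1n, hM1⟩ := OscAux.exists_bound_of_periodic hd1.continuous hp1
    obtain ⟨M2, hM2n, hM2⟩ := OscAux.exists_bound_of_periodic hd2.continuous hp2
    obtain ⟨M3, hM3n, hM3⟩ := OscAux.exists_bound_of_periodic hd3.continuous hp3
    set M := max (max M0 M1) (max M2 M3) with hMdef
    have hM : 0 ≤ M := le_trans hM0n ((le_max_left _ _).trans (le_max_left _ _))
    have hb0 : ∀ θ, ‖φ θ‖ ≤ M := fun θ =>
      (hM0 θ).trans ((le_max_left _ _).trans (le_max_left _ _))
    have hb1 : ∀ θ, ‖deriv φ θ‖ ≤ M := fun θ =>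
      (hM1 θ).trans ((le_max_right _ _).trans (le_max_left _ _))
    have hb2 : ∀ θ, ‖deriv (deriv φ) θ‖ ≤ M := fun θ =>
      (hM2 θ).trans ((le_max_left _ _).trans (le_max_right _ _))
    have hb3 : ∀ θ, ‖deriv (deriv (deriv φ)) θ‖ ≤ M := fun θ =>
      (hM3 θ).trans ((le_max_right _ _).trans (le_max_right _ _))
    obtain ⟨θ₀, hθ₀⟩ := Set.nonempty_iff_ne_empty.2 hSne
    obtain ⟨w, hw⟩ : ∃ x : ℝ, x = sInf ((fun θ : ℝ => 2 * |Real.sin θ|) '' tsupport φ) :=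
      ⟨_, rfl⟩
    rw [← hw]
    have hK : IsCompact (tsupport φ ∩ Set.Icc 0 (2*π)) :=
      isCompact_Icc.inter_left (isClosed_tsupport φ)
    have hKne : (tsupport φ ∩ Set.Icc 0 (2*π)).Nonempty := by
      obtain ⟨θ', hθ'S, hθ'I, _⟩ := OscAux.reduce hφper hθ₀
      exact ⟨θ', hθ'S, hθ'I⟩
    have hFc : ContinuousOn (fun θ : ℝ => 2 * |Real.sin θ|)
        (tsupport φ ∩ Set.Icc 0 (2*π)) :=
      (continuous_const.mul (Real.continuous_sin.abs)).continuousOn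
    obtain ⟨θm, hθmK, hθmmin⟩ := hK.exists_isMinOn hKne hFc
    rw [isMinOn_iff] at hθmmin
    have hsinm : Real.sin θm ≠ 0 :=
      OscAux.sin_ne_zero_of_hsupp (hsupp θm hθmK.1).1 (hsupp θm hθmK.1).2
    have hcpos : 0 < 2 * |Real.sin θm| := by
      have := abs_pos.mpr hsinm
      linarith
    have hwc : 2 * |Real.sin θm| ≤ w := by
      rw [hw]
      apply le_csInf ⟨_, Set.mem_image_of_mem _ hθ₀⟩
      rintro b ⟨θ, hθS, rfl⟩
      obtain ⟨θ', hθ'S, hθ'I, hsin⟩ := OscAux.reduce hφper hθS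
      have h1 := hθmmin θ' ⟨hθ'S, hθ'I⟩
      simp only at h1 ⊢
      rw [← hsin]
      exact h1
    have hwpos : 0 < w := lt_of_lt_of_le hcpos hwc
    have hwle : ∀ θ ∈ tsupport φ, w ≤ 2*|Real.sin θ| := by
      intro θ hθ
      rw [hw]
      apply csInf_le
      · refine ⟨0, ?_⟩
        rintro b ⟨t, _, rfl⟩
        positivity
      · exact Set.mem_image_of_mem _ hθ
    obtain ⟨Q, hQdef⟩ : ∃ x : ℝ, x = M * OscAux.DD (3*w/4) ^ 3 := ⟨_, rfl⟩
    have hApos : (0:ℝ) < 3*w/4 := by linarith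
    have hDpos : 0 < OscAux.DD (3*w/4) := by
      rw [OscAux.DD]
      positivity
    have hQ0 : 0 ≤ Q := by
      rw [hQdef]
      exact mul_nonneg hM (pow_nonneg hDpos.le 3)
    refine ⟨(w/2 + 1) * Q^2, fun s hs => ?_⟩
    have hs0 : (0:ℝ) < s := lt_of_lt_of_le one_pos hs
    have hterm : ∀ m : { m : ℤ // |(m : ℝ)| ≤ w * s / 4 },
        ‖(1 / (2 * π) : ℝ) •
          ∫ θ in Set.Ioc (0 : ℝ) (2 * π),
            Complex.exp (-Complex.I * ((((m : ℤ) : ℝ) * θ + 2 * s * Real.cos θ : ℝ) : ℂ)) *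
              φ θ‖ ^ 2 ≤ Q^2 / s^6 := by
      intro m
      have hlow : ∀ θ ∈ tsupport φ, (3*w/4) * s ≤ ‖OscAux.aa (m:ℤ) s θ‖ := by
        intro θ hθ
        rw [OscAux.norm_aa]
        have h1 := hwle θ hθ
        have h2 : |((m:ℤ):ℝ)| ≤ w*s/4 := m.2
        have habs : |2*s*Real.sin θ| = 2*s*|Real.sin θ| := by
          rw [abs_mul, _root_.abs_of_nonneg (by linarith : (0:ℝ) ≤ 2*s)]
        have tri := abs_sub_abs_le_abs_sub (2*s*Real.sin θ) (((m:ℤ):ℝ))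
        rw [abs_sub_comm] at tri
        have hws : w * s ≤ 2*|Real.sin θ| * s := mul_le_mul_of_nonneg_right h1 hs0.le
        nlinarith
      have hest := OscAux.main_est hφ8 hφper hApos hM hb0 hb1 hb2 hb3 hs hlow
      have hEq : (∫ θ in Set.Ioc (0 : ℝ) (2 * π),
            Complex.exp (-Complex.I * ((((m : ℤ) : ℝ) * θ + 2 * s * Real.cos θ : ℝ) : ℂ)) *
              φ θ)
          = ∫ θ in Set.Ioc (0 : ℝ) (2*π), OscAux.Eph (m:ℤ) s θ * φ θ := rfl
      rw [hEq]
      have h2 : ‖(1 / (2 * π) : ℝ) •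
          ∫ θ in Set.Ioc (0 : ℝ) (2*π), OscAux.Eph (m:ℤ) s θ * φ θ‖ ≤ Q / s^3 := by
        rw [norm_smul, Real.norm_eq_abs, abs_of_pos (by positivity)]
        calc (1/(2*π)) * ‖∫ θ in Set.Ioc (0 : ℝ) (2*π), OscAux.Eph (m:ℤ) s θ * φ θ‖
            ≤ (1/(2*π)) * ((2*π) * (M * OscAux.DD (3*w/4) ^ 3) / s^3) :=
              mul_le_mul_of_nonneg_left hest (by positivity)
          _ = Q / s^3 := by
              rw [hQdef]
              have hπ : (π:ℝ) ≠ 0 := Real.pi_ne_zero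
              field_simp
      calc ‖(1 / (2 * π) : ℝ) •
            ∫ θ in Set.Ioc (0 : ℝ) (2*π), OscAux.Eph (m:ℤ) s θ * φ θ‖ ^ 2
          ≤ (Q / s^3)^2 := pow_le_pow_left₀ (norm_nonneg _) h2 2
        _ = Q^2 / s^6 := by
            rw [div_pow]
            norm_num
            ring
    have hC0 : (0:ℝ) ≤ (w/2 + 1) * Q^2 / s^4 :=
      div_nonneg (mul_nonneg (by nlinarith) (sq_nonneg Q)) (by positivity)
    refine tsum_le_of_sum_le' hC0 (fun u => ?_)
    have h1 := Finset.sum_le_sum (fun i _ => hterm i) (s := u)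
    refine le_trans h1 ?_
    rw [Finset.sum_const, nsmul_eq_mul]
    -- card bound
    set N := ⌊w*s/4⌋ with hN
    have hN0 : 0 ≤ N := Int.le_floor.mpr (by push_cast; nlinarith)
    have hcard : (u.card : ℝ) ≤ (w/2+1)*s := by
      have hmap : ∀ i ∈ u, (i : ℤ) ∈ Finset.Icc (-N) N := by
        intro i _
        have h2 := i.2
        rw [Finset.mem_Icc]
        constructor
        · rw [neg_le]
          exact Int.le_floor.mpr (by push_cast; nlinarith [neg_abs_le (((i:ℤ):ℝ))])
        · exact Int.le_floor.mpr ((le_abs_self _).trans h2)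
      have hinj : Set.InjOn (fun i : { m : ℤ // |(m : ℝ)| ≤ w * s / 4 } => (i:ℤ)) u :=
        fun a _ b _ h => Subtype.ext h
      have hle := Finset.card_le_card_of_injOn _ hmap hinj
      have hicc : (Finset.Icc (-N) N).card = (N + 1 - -N).toNat := Int.card_Icc _ _
      have hflo : (N:ℝ) ≤ w*s/4 := Int.floor_le _
      have : ((Finset.Icc (-N) N).card : ℝ) = 2*(N:ℝ) + 1 := by
        rw [hicc, show N + 1 - -N = 2*N+1 from by ring]
        rw [show ((2*N+1).toNat : ℝ) = ((((2*N+1).toNat : ℤ)) : ℝ) from by push_cast; ring,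
          Int.toNat_of_nonneg (show (0:ℤ) ≤ 2*N+1 by omega)]
        push_cast
        ring
      have h4 : (u.card : ℝ) ≤ ((Finset.Icc (-N) N).card : ℝ) := by exact_mod_cast hle
      rw [this] at h4
      nlinarith
    calc (u.card : ℝ) * (Q^2 / s^6) ≤ ((w/2+1)*s) * (Q^2 / s^6) :=
          mul_le_mul_of_nonneg_right hcard (by positivity)
      _ = ((w/2+1) * Q^2) / s^5 := by field_simp
      _ ≤ ((w/2+1) * Q^2) / s^4 := by
          apply div_le_div_of_nonneg_left
            (mul_nonneg (by linarith : (0:ℝ) ≤ w/2+1) (sq_nonneg Q)) (by positivity)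
          calc s^4 = s^4 * 1 := by ring
            _ ≤ s^4 * s := by nlinarith [pow_nonneg hs0.le 4]
            _ = s^5 := by ring
end
end

section
/- Let μ be an absolutely continuous probability measure on ℝ with density f satisfying ∫_ℝ |f(x)|^{1+q} dx = Q < ∞ for some q > 0. Let 0 < τ ≤ 1 and suppose B = ∫_ℝ |x|^τ dμ(x) < ∞. Then for every κ with 0 < κ < [1 + 2/τ + 1/q]^{−1}, there exists a finite constant K (depending only on κ, τ, q, Q and B) such that for every α ∈ ℝ: ∫_ℝ |x|^κ / |x − α|^κ dμ(x) ≤ K ∫_ℝ |x − α|^{−κ} dμ(x). -/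
/-!
Write `G α = ∫ |x - α|^(-κ) dμ`. Since `|x - α| ≤ (1 + |x|) (1 + |α|)`, `G α` is at least a
positive multiple of `(1 + |α|)^(-κ)`, so it suffices to bound the left-hand side by
`C (1 + |α|)^(-κ) + G α`. For `|α| ≤ 1` this follows from `|x|^κ ≤ |x - α|^κ + |α|^κ`.
For `|α| ≥ 1` split at the ball `D` of radius `|α| / 2` around `α`. Outside `D` the integrand is
at most `(|α| / 2)^(-κ) (1 + |x|^τ)`. Inside, `|x| ≤ 2 |α|`, and Hölder's inequality against
`f ∈ L^(1+q)` gives `∫_D |x - α|^(-κ) dμ ≲ μ(D)^(1 - κ r)` with `r = (1 + q) / q`, while Markov's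
inequality gives `μ(D) ≲ B |α|^(-τ)`. The hypothesis on `κ` says exactly `2κ < τ (1 - κ r)`,
which makes the product `≲ |α|^(-κ)`.
-/

open MeasureTheory Real Set Metric
open scoped ENNReal

lemma lintegral_Ioc_rpow_neg {c : ℝ} (hc : c < 1) {s : ℝ} (hs : 0 ≤ s) :
    ∫⁻ t in Ioc 0 s, ENNReal.ofReal (t ^ (-c)) = ENNReal.ofReal (s ^ (1 - c) / (1 - c)) := by
  have hint : IntegrableOn (fun t : ℝ => t ^ (-c)) (Ioc 0 s) :=
    (intervalIntegral.intervalIntegrable_rpow' (by linarith)).1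
  rw [← ofReal_integral_eq_lintegral_ofReal hint
    ((ae_restrict_mem measurableSet_Ioc).mono fun t ht => rpow_nonneg ht.1.le _),
    ← intervalIntegral.integral_of_le hs, integral_rpow (Or.inl (by linarith)),
    zero_rpow (by linarith), neg_add_eq_sub, sub_zero]

lemma lintegral_closedBall_comp_abs_sub_le (g : ℝ → ℝ≥0∞) (hg : Measurable g) (α s : ℝ) :
    ∫⁻ x in closedBall α s, g |x - α| ≤ 2 * ∫⁻ t in Icc 0 s, g t := by
  have hsub : closedBall α s ⊆ (fun x => α - x) ⁻¹' Icc 0 s ∪ (fun x => x - α) ⁻¹' Icc 0 s := by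
    intro x hx
    rw [mem_closedBall, dist_eq, abs_le] at hx
    rcases le_total x α with h | h
    · exact Or.inl ⟨by linarith, by linarith⟩
    · exact Or.inr ⟨by linarith, by linarith⟩
  have hIcc : ∫⁻ t in Icc 0 s, g |t| = ∫⁻ t in Icc 0 s, g t :=
    setLIntegral_congr_fun measurableSet_Icc fun t ht => by rw [abs_of_nonneg ht.1]
  calc ∫⁻ x in closedBall α s, g |x - α|
      ≤ (∫⁻ x in (fun x => α - x) ⁻¹' Icc 0 s, g |α - x|)
          + ∫⁻ x in (fun x => x - α) ⁻¹' Icc 0 s, g |x - α| := by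
        simp_rw [abs_sub_comm α]
        exact (lintegral_mono_set hsub).trans (lintegral_union_le _ _ _)
    _ = 2 * ∫⁻ t in Icc 0 s, g t := by
        have habs : Measurable fun t : ℝ => g |t| := hg.comp measurable_abs
        rw [(volume.measurePreserving_sub_left α).setLIntegral_comp_preimage measurableSet_Icc
            habs, (measurePreserving_sub_right volume α).setLIntegral_comp_preimage
            measurableSet_Icc habs, hIcc, two_mul]

lemma lintegral_closedBall_abs_sub_rpow_neg_le {c : ℝ} (hc : c < 1) (α : ℝ) {s : ℝ}
    (hs : 0 ≤ s) :
    ∫⁻ x in closedBall α s, ENNReal.ofReal (|x - α| ^ (-c))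
      ≤ ENNReal.ofReal (2 * (s ^ (1 - c) / (1 - c))) := by
  calc ∫⁻ x in closedBall α s, ENNReal.ofReal (|x - α| ^ (-c))
      ≤ 2 * ∫⁻ t in Icc 0 s, ENNReal.ofReal (t ^ (-c)) :=
        lintegral_closedBall_comp_abs_sub_le _ (by fun_prop) α s
    _ = ENNReal.ofReal (2 * (s ^ (1 - c) / (1 - c))) := by
        rw [← setLIntegral_congr Ioc_ae_eq_Icc, lintegral_Ioc_rpow_neg hc hs,
          ENNReal.ofReal_mul zero_le_two, ENNReal.ofReal_ofNat]

lemma setLIntegral_closedBall_rpow_neg_withDensity_le {w : ℝ → ℝ≥0∞} (hw : Measurable w)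
    {p r c : ℝ} (hpr : p.HolderConjugate r) (hcr : c * r < 1) (α : ℝ) {s : ℝ} (hs : 0 ≤ s) :
    ∫⁻ x in closedBall α s, ENNReal.ofReal (|x - α| ^ (-c)) ∂(volume.withDensity w)
      ≤ (∫⁻ x, w x ^ p) ^ (1 / p)
          * ENNReal.ofReal (2 * (s ^ (1 - c * r) / (1 - c * r))) ^ (1 / r) := by
  have hg : Measurable fun x : ℝ => ENNReal.ofReal (|x - α| ^ (-c)) := by fun_prop
  have hpow : ∫⁻ x in closedBall α s, ENNReal.ofReal (|x - α| ^ (-c)) ^ r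
      = ∫⁻ x in closedBall α s, ENNReal.ofReal (|x - α| ^ (-(c * r))) := by
    refine lintegral_congr fun x => ?_
    rw [ENNReal.ofReal_rpow_of_nonneg (rpow_nonneg (abs_nonneg _) _) hpr.symm.nonneg,
      ← rpow_mul (abs_nonneg _), neg_mul]
  rw [restrict_withDensity measurableSet_closedBall,
    lintegral_withDensity_eq_lintegral_mul _ hw hg]
  refine (ENNReal.lintegral_mul_le_Lp_mul_Lq _ hpr hw.aemeasurable hg.aemeasurable).trans ?_
  gcongr ?_ ^ _ * ?_ ^ _
  · exact hpr.one_div_nonneg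
  · exact setLIntegral_le_lintegral _ _
  · exact hpr.symm.one_div_nonneg
  · exact hpow ▸ lintegral_closedBall_abs_sub_rpow_neg_le hcr α hs

lemma setLIntegral_rpow_neg_withDensity_le {w : ℝ → ℝ≥0∞} (hw : Measurable w)
    [IsFiniteMeasure (volume.withDensity w)] {p r c A : ℝ} (hpr : p.HolderConjugate r)
    (hc : 0 ≤ c) (hcr : c * r < 1) (hA₀ : 0 ≤ A) (hA : ∫⁻ x, w x ^ p ≤ ENNReal.ofReal A)
    (α : ℝ) (D : Set ℝ) :
    ∫⁻ x in D, ENNReal.ofReal (|x - α| ^ (-c)) ∂(volume.withDensity w)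
      ≤ ENNReal.ofReal ((A ^ (1 / p) * (2 / (1 - c * r)) ^ (1 / r) + 1)
          * (volume.withDensity w).real D ^ (1 - c * r)) := by
  set μ := volume.withDensity w
  set m := μ.real D
  set θ := 1 - c * r with hθ_def
  have hθ : 0 < θ := sub_pos.2 hcr
  have hr : 0 < r := hpr.symm.pos
  rcases (measureReal_nonneg : 0 ≤ m).eq_or_lt with hm | hm
  · have hD : μ D = 0 := by
      rwa [eq_comm, measureReal_eq_zero_iff (measure_ne_top μ D)] at hm
    simp [Measure.restrict_eq_zero.2 hD]
  -- the ball of radius `m ^ r` balances the Hölder bound against the trivial bound outside it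
  set s := m ^ r
  have hs : 0 < s := rpow_pos_of_pos hm r
  have hball : ∫⁻ x in closedBall α s, ENNReal.ofReal (|x - α| ^ (-c)) ∂μ
      ≤ ENNReal.ofReal (A ^ (1 / p) * (2 / θ) ^ (1 / r) * m ^ θ) := by
    have hpow : (2 * (s ^ θ / θ)) ^ (1 / r) = (2 / θ) ^ (1 / r) * m ^ θ := by
      rw [mul_div_assoc', mul_div_right_comm, mul_rpow (by positivity) (by positivity),
        ← rpow_mul hm.le, ← rpow_mul hm.le, mul_comm r, mul_assoc, mul_one_div_cancel hr.ne',
        mul_one]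
    calc ∫⁻ x in closedBall α s, ENNReal.ofReal (|x - α| ^ (-c)) ∂μ
        ≤ (∫⁻ x, w x ^ p) ^ (1 / p) * ENNReal.ofReal (2 * (s ^ θ / θ)) ^ (1 / r) :=
          setLIntegral_closedBall_rpow_neg_withDensity_le hw hpr hcr α hs.le
      _ ≤ ENNReal.ofReal A ^ (1 / p) * ENNReal.ofReal (2 * (s ^ θ / θ)) ^ (1 / r) := by
          gcongr
          exact hpr.one_div_nonneg
      _ = ENNReal.ofReal (A ^ (1 / p) * (2 / θ) ^ (1 / r) * m ^ θ) := by
          rw [ENNReal.ofReal_rpow_of_nonneg hA₀ hpr.one_div_nonneg,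
            ENNReal.ofReal_rpow_of_nonneg (by positivity) hpr.symm.one_div_nonneg, hpow,
            ← ENNReal.ofReal_mul (by positivity), mul_assoc]
  have hfar : ∫⁻ x in D \ closedBall α s, ENNReal.ofReal (|x - α| ^ (-c)) ∂μ
      ≤ ENNReal.ofReal (m ^ θ) := by
    calc ∫⁻ x in D \ closedBall α s, ENNReal.ofReal (|x - α| ^ (-c)) ∂μ
        ≤ ∫⁻ _ in D \ closedBall α s, ENNReal.ofReal (s ^ (-c)) ∂μ := by
          refine setLIntegral_mono measurable_const fun x hx => ?_
          have hsx : s < |x - α| := by simpa [dist_eq] using hx.2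
          exact ENNReal.ofReal_le_ofReal
            (rpow_le_rpow_of_nonpos hs hsx.le (neg_nonpos.2 hc))
      _ ≤ ENNReal.ofReal (s ^ (-c)) * μ D := by
          rw [setLIntegral_const]
          exact mul_le_mul_right (measure_mono sdiff_subset) _
      _ = ENNReal.ofReal (m ^ θ) := by
          rw [← ofReal_measureReal (measure_ne_top μ D), ← ENNReal.ofReal_mul (by positivity),
            ← rpow_mul hm.le, ← rpow_add_one hm.ne', hθ_def]
          congr 2
          ring
  calc ∫⁻ x in D, ENNReal.ofReal (|x - α| ^ (-c)) ∂μ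
      ≤ (∫⁻ x in closedBall α s, ENNReal.ofReal (|x - α| ^ (-c)) ∂μ)
          + ∫⁻ x in D \ closedBall α s, ENNReal.ofReal (|x - α| ^ (-c)) ∂μ :=
        (lintegral_mono_set fun x hx => by by_cases h : x ∈ closedBall α s <;> simp [*]).trans
          (lintegral_union_le _ _ _)
    _ ≤ ENNReal.ofReal (A ^ (1 / p) * (2 / θ) ^ (1 / r) * m ^ θ) + ENNReal.ofReal (m ^ θ) :=
        add_le_add hball hfar
    _ = ENNReal.ofReal ((A ^ (1 / p) * (2 / θ) ^ (1 / r) + 1) * m ^ θ) := by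
        rw [← ENNReal.ofReal_add (by positivity) (by positivity), add_one_mul]

lemma rpow_div_rpow_abs_sub_le {κ : ℝ} (hκ₀ : 0 < κ) (hκ₁ : κ ≤ 1) (x α : ℝ) :
    |x| ^ κ / |x - α| ^ κ ≤ 1 + |α| ^ κ * |x - α| ^ (-κ) := by
  rcases eq_or_ne x α with rfl | hxα
  · simp only [sub_self, abs_zero, zero_rpow hκ₀.ne', div_zero]
    positivity
  have hd : 0 < |x - α| := abs_pos.2 (sub_ne_zero.2 hxα)
  have hsub : |x| ^ κ ≤ |x - α| ^ κ + |α| ^ κ :=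
    calc |x| ^ κ ≤ (|x - α| + |α|) ^ κ := by
          gcongr
          simpa using abs_add_le (x - α) α
      _ ≤ |x - α| ^ κ + |α| ^ κ := rpow_add_le_add_rpow hd.le (abs_nonneg _) hκ₀.le hκ₁
  rw [div_le_iff₀ (rpow_pos_of_pos hd κ), add_mul, one_mul, mul_assoc,
    ← rpow_add hd, neg_add_cancel, rpow_zero, mul_one]
  linarith

lemma lintegral_rpow_div_le_of_abs_le_one (μ : Measure ℝ) {κ : ℝ} (hκ₀ : 0 < κ)
    (hκ₁ : κ ≤ 1) {α : ℝ} (hα : |α| ≤ 1) :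
    ∫⁻ x, ENNReal.ofReal (|x| ^ κ / |x - α| ^ κ) ∂μ
      ≤ μ univ + ∫⁻ x, ENNReal.ofReal (|x - α| ^ (-κ)) ∂μ := by
  calc ∫⁻ x, ENNReal.ofReal (|x| ^ κ / |x - α| ^ κ) ∂μ
      ≤ ∫⁻ x, (1 + ENNReal.ofReal (|x - α| ^ (-κ))) ∂μ := by
        refine lintegral_mono fun x => ?_
        rw [← ENNReal.ofReal_one, ← ENNReal.ofReal_add zero_le_one (by positivity)]
        refine ENNReal.ofReal_le_ofReal ((rpow_div_rpow_abs_sub_le hκ₀ hκ₁ x α).trans ?_)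
        gcongr
        exact (mul_le_of_le_one_left (by positivity) (rpow_le_one (abs_nonneg _) hα hκ₀.le))
    _ = μ univ + ∫⁻ x, ENNReal.ofReal (|x - α| ^ (-κ)) ∂μ := by
        rw [lintegral_add_left measurable_const, lintegral_const, one_mul]

lemma lintegral_abs_rpow_le_measure_univ_add {μ : Measure ℝ} {κ τ : ℝ} (hκ : 0 ≤ κ) (hκτ : κ ≤ τ) :
    ∫⁻ x, ENNReal.ofReal (|x| ^ κ) ∂μ ≤ μ univ + ∫⁻ x, ENNReal.ofReal (|x| ^ τ) ∂μ := by
  calc ∫⁻ x, ENNReal.ofReal (|x| ^ κ) ∂μ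
      ≤ ∫⁻ x, (1 + ENNReal.ofReal (|x| ^ τ)) ∂μ := by
        refine lintegral_mono fun x => ?_
        rw [← ENNReal.ofReal_one, ← ENNReal.ofReal_add zero_le_one (by positivity)]
        refine ENNReal.ofReal_le_ofReal ?_
        rcases le_total |x| 1 with hx | hx
        · linarith [rpow_le_one (abs_nonneg x) hx hκ, rpow_nonneg (abs_nonneg x) τ]
        · linarith [rpow_le_rpow_of_exponent_le hx hκτ]
    _ = μ univ + ∫⁻ x, ENNReal.ofReal (|x| ^ τ) ∂μ := by
        rw [lintegral_add_left measurable_const, lintegral_const, one_mul]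

lemma setLIntegral_closedBall_rpow_div_le (μ : Measure ℝ) {κ : ℝ} (hκ : 0 ≤ κ) (α ρ : ℝ) :
    ∫⁻ x in closedBall α ρ, ENNReal.ofReal (|x| ^ κ / |x - α| ^ κ) ∂μ
      ≤ ENNReal.ofReal ((|α| + ρ) ^ κ)
          * ∫⁻ x in closedBall α ρ, ENNReal.ofReal (|x - α| ^ (-κ)) ∂μ := by
  rw [← lintegral_const_mul _ (by fun_prop)]
  refine setLIntegral_mono (by fun_prop) fun x hx => ?_
  have hx : |x| ≤ |α| + ρ := by
    rw [mem_closedBall, dist_eq] at hx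
    linarith [abs_sub_abs_le_abs_sub x α]
  rw [← ENNReal.ofReal_mul' (by positivity), div_eq_mul_inv, ← rpow_neg (abs_nonneg _)]
  gcongr

lemma setLIntegral_compl_closedBall_rpow_div_le (μ : Measure ℝ) {κ : ℝ} (hκ : 0 ≤ κ) (α : ℝ)
    {ρ : ℝ} (hρ : 0 < ρ) :
    ∫⁻ x in (closedBall α ρ)ᶜ, ENNReal.ofReal (|x| ^ κ / |x - α| ^ κ) ∂μ
      ≤ ENNReal.ofReal (ρ ^ (-κ)) * ∫⁻ x, ENNReal.ofReal (|x| ^ κ) ∂μ := by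
  rw [← lintegral_const_mul _ (by fun_prop)]
  refine (setLIntegral_le_lintegral _ _).trans' (setLIntegral_mono (by fun_prop) fun x hx => ?_)
  have hx : ρ < |x - α| := by simpa [dist_eq] using hx
  rw [← ENNReal.ofReal_mul (by positivity), div_eq_mul_inv, ← rpow_neg (abs_nonneg _), mul_comm]
  exact ENNReal.ofReal_le_ofReal (mul_le_mul_of_nonneg_right
    (rpow_le_rpow_of_nonpos hρ hx.le (neg_nonpos.2 hκ)) (by positivity))

lemma measure_abs_ge_le_of_lintegral_rpow_le {μ : Measure ℝ} {τ B : ℝ} (hτ : 0 ≤ τ)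
    (hB : ∫⁻ x, ENNReal.ofReal (|x| ^ τ) ∂μ ≤ ENNReal.ofReal B) {ε : ℝ} (hε : 0 < ε) :
    μ {x | ε ≤ |x|} ≤ ENNReal.ofReal (B * ε ^ (-τ)) := by
  have hετ : 0 < ε ^ τ := rpow_pos_of_pos hε τ
  calc μ {x | ε ≤ |x|}
      ≤ μ {x | ENNReal.ofReal (ε ^ τ) ≤ ENNReal.ofReal (|x| ^ τ)} :=
        measure_mono fun x hx => ENNReal.ofReal_le_ofReal (rpow_le_rpow hε.le hx hτ)
    _ ≤ (∫⁻ x, ENNReal.ofReal (|x| ^ τ) ∂μ) / ENNReal.ofReal (ε ^ τ) :=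
        meas_ge_le_lintegral_div (by fun_prop) (by simpa using hετ) ENNReal.ofReal_ne_top
    _ ≤ ENNReal.ofReal (B * ε ^ (-τ)) := by
        rw [rpow_neg hε.le, ← div_eq_mul_inv, ENNReal.ofReal_div_of_pos hετ]
        gcongr

lemma measureReal_closedBall_half_abs_le {μ : Measure ℝ} {τ B : ℝ} (hτ : 0 ≤ τ) (hB₀ : 0 ≤ B)
    (hB : ∫⁻ x, ENNReal.ofReal (|x| ^ τ) ∂μ ≤ ENNReal.ofReal B) {α : ℝ} (hα : 0 < |α|) :
    μ.real (closedBall α (|α| / 2)) ≤ 2 ^ τ * B * |α| ^ (-τ) := by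
  have hsub : closedBall α (|α| / 2) ⊆ {x | |α| / 2 ≤ |x|} := fun x hx => by
    rw [mem_closedBall, dist_eq] at hx
    show |α| / 2 ≤ |x|
    linarith [abs_sub_abs_le_abs_sub α x, abs_sub_comm x α]
  have := (measure_mono hsub).trans
    (measure_abs_ge_le_of_lintegral_rpow_le hτ hB (half_pos hα))
  rw [div_rpow hα.le zero_le_two, rpow_neg zero_le_two, div_inv_eq_mul] at this
  exact ENNReal.toReal_le_of_le_ofReal (by positivity) (this.trans_eq (by ring_nf))

lemma lintegral_rpow_div_le_of_one_le_abs {μ : Measure ℝ} [IsProbabilityMeasure μ]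
    {κ τ θ C B : ℝ} (hκ : 0 < κ) (hκτ : κ ≤ τ) (hθ : 0 ≤ θ) (h2κ : 2 * κ ≤ τ * θ)
    (hC : 0 ≤ C) (hB₀ : 0 ≤ B) (hB : ∫⁻ x, ENNReal.ofReal (|x| ^ τ) ∂μ ≤ ENNReal.ofReal B)
    {α : ℝ} (hα : 1 ≤ |α|)
    (hmass : ∀ D, ∫⁻ x in D, ENNReal.ofReal (|x - α| ^ (-κ)) ∂μ
      ≤ ENNReal.ofReal (C * μ.real D ^ θ)) :
    ∫⁻ x, ENNReal.ofReal (|x| ^ κ / |x - α| ^ κ) ∂μ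
      ≤ ENNReal.ofReal ((2 ^ κ * C * (2 ^ τ * B) ^ θ + 2 ^ κ * (1 + B)) * |α| ^ (-κ)) := by
  set a := |α|
  have ha : 0 < a := one_pos.trans_le hα
  have hhalf (s : ℝ) : (a / 2) ^ (-s) = 2 ^ s * a ^ (-s) := by
    rw [div_rpow ha.le zero_le_two, rpow_neg zero_le_two, div_inv_eq_mul, mul_comm]
  have hmeasure : μ.real (closedBall α (a / 2)) ≤ 2 ^ τ * B * a ^ (-τ) :=
    measureReal_closedBall_half_abs_le (hκ.le.trans hκτ) hB₀ hB ha
  have hnear : ∫⁻ x in closedBall α (a / 2), ENNReal.ofReal (|x| ^ κ / |x - α| ^ κ) ∂μ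
      ≤ ENNReal.ofReal (2 ^ κ * C * (2 ^ τ * B) ^ θ * a ^ (-κ)) := by
    refine (setLIntegral_closedBall_rpow_div_le μ hκ.le α (a / 2)).trans
      ((mul_le_mul_right (hmass _) _).trans ?_)
    rw [← ENNReal.ofReal_mul (by positivity)]
    refine ENNReal.ofReal_le_ofReal ?_
    have hpow : a ^ κ * (a ^ (-τ)) ^ θ ≤ a ^ (-κ) := by
      rw [← rpow_mul ha.le, ← rpow_add ha]
      exact rpow_le_rpow_of_exponent_le hα (by nlinarith)
    calc (a + a / 2) ^ κ * (C * μ.real (closedBall α (a / 2)) ^ θ)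
        ≤ (2 * a) ^ κ * (C * (2 ^ τ * B * a ^ (-τ)) ^ θ) := by gcongr; linarith
      _ = 2 ^ κ * C * (2 ^ τ * B) ^ θ * (a ^ κ * (a ^ (-τ)) ^ θ) := by
          rw [mul_rpow zero_le_two ha.le, mul_rpow (by positivity) (by positivity)]
          ring
      _ ≤ 2 ^ κ * C * (2 ^ τ * B) ^ θ * a ^ (-κ) := by gcongr
  have hfar : ∫⁻ x in (closedBall α (a / 2))ᶜ, ENNReal.ofReal (|x| ^ κ / |x - α| ^ κ) ∂μ
      ≤ ENNReal.ofReal (2 ^ κ * (1 + B) * a ^ (-κ)) := by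
    refine (setLIntegral_compl_closedBall_rpow_div_le μ hκ.le α (half_pos ha)).trans ?_
    calc ENNReal.ofReal ((a / 2) ^ (-κ)) * ∫⁻ x, ENNReal.ofReal (|x| ^ κ) ∂μ
        ≤ ENNReal.ofReal ((a / 2) ^ (-κ)) * ENNReal.ofReal (1 + B) := by
          rw [ENNReal.ofReal_add zero_le_one hB₀, ENNReal.ofReal_one, ← measure_univ (μ := μ)]
          gcongr
          exact (lintegral_abs_rpow_le_measure_univ_add hκ.le hκτ).trans (add_le_add le_rfl hB)
      _ = ENNReal.ofReal (2 ^ κ * (1 + B) * a ^ (-κ)) := by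
          rw [← ENNReal.ofReal_mul (by positivity), hhalf]
          ring_nf
  calc ∫⁻ x, ENNReal.ofReal (|x| ^ κ / |x - α| ^ κ) ∂μ
      = (∫⁻ x in closedBall α (a / 2), ENNReal.ofReal (|x| ^ κ / |x - α| ^ κ) ∂μ)
          + ∫⁻ x in (closedBall α (a / 2))ᶜ, ENNReal.ofReal (|x| ^ κ / |x - α| ^ κ) ∂μ :=
        (lintegral_add_compl _ measurableSet_closedBall).symm
    _ ≤ _ := (add_le_add hnear hfar).trans_eq <| by
        rw [← ENNReal.ofReal_add (by positivity) (by positivity)]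
        ring_nf

lemma exists_lintegral_rpow_div_le_add {μ : Measure ℝ} [IsProbabilityMeasure μ]
    {κ τ θ C B : ℝ} (hκ : 0 < κ) (hκ₁ : κ ≤ 1) (hκτ : κ ≤ τ) (hθ : 0 ≤ θ)
    (h2κ : 2 * κ ≤ τ * θ) (hC : 0 ≤ C) (hB₀ : 0 ≤ B)
    (hB : ∫⁻ x, ENNReal.ofReal (|x| ^ τ) ∂μ ≤ ENNReal.ofReal B)
    (hmass : ∀ α D, ∫⁻ x in D, ENNReal.ofReal (|x - α| ^ (-κ)) ∂μ
      ≤ ENNReal.ofReal (C * μ.real D ^ θ)) :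
    ∃ C₀, 0 ≤ C₀ ∧ ∀ α, ∫⁻ x, ENNReal.ofReal (|x| ^ κ / |x - α| ^ κ) ∂μ
      ≤ ENNReal.ofReal (C₀ * (1 + |α|) ^ (-κ)) + ∫⁻ x, ENNReal.ofReal (|x - α| ^ (-κ)) ∂μ := by
  set C' := 2 ^ κ * C * (2 ^ τ * B) ^ θ + 2 ^ κ * (1 + B)
  have hC' : 0 ≤ C' := by positivity
  refine ⟨(1 + C') * 2 ^ κ, by positivity, fun α => ?_⟩
  have hα₀ : 0 < 1 + |α| := by positivity
  have hscale : 2 ^ κ * (1 + |α|) ^ (-κ) = (2 / (1 + |α|)) ^ κ := by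
    rw [div_rpow zero_le_two hα₀.le, rpow_neg hα₀.le, div_eq_mul_inv]
  rcases le_total |α| 1 with hα | hα
  · refine (lintegral_rpow_div_le_of_abs_le_one μ hκ hκ₁ hα).trans (add_le_add ?_ le_rfl)
    rw [measure_univ, ← ENNReal.ofReal_one, mul_assoc, hscale]
    refine ENNReal.ofReal_le_ofReal (one_le_mul_of_one_le_of_one_le (by linarith)
      (one_le_rpow ?_ hκ.le))
    rw [le_div_iff₀ hα₀]
    linarith
  · refine (lintegral_rpow_div_le_of_one_le_abs hκ hκτ hθ h2κ hC hB₀ hB hα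
      (hmass α)).trans (le_add_right (ENNReal.ofReal_le_ofReal ?_))
    have hdecay : |α| ^ (-κ) ≤ (2 / (1 + |α|)) ^ κ := by
      rw [rpow_neg (by linarith), ← inv_rpow (by linarith)]
      gcongr
      rw [inv_eq_one_div, div_le_div_iff₀ (by linarith) hα₀]
      linarith
    rw [mul_assoc (1 + C'), hscale]
    exact mul_le_mul (by linarith) hdecay (by positivity) (by positivity)

lemma lintegral_abs_sub_rpow_neg_ge (μ : Measure ℝ) [NullSingletonClass μ] {κ : ℝ}
    (hκ : 0 ≤ κ) (α : ℝ) :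
    ENNReal.ofReal ((1 + |α|) ^ (-κ)) * ∫⁻ x, ENNReal.ofReal ((1 + |x|) ^ (-κ)) ∂μ
      ≤ ∫⁻ x, ENNReal.ofReal (|x - α| ^ (-κ)) ∂μ := by
  rw [← lintegral_const_mul _ (by fun_prop)]
  refine lintegral_mono_ae ((Measure.ae_ne μ α).mono fun x hxα => ?_)
  have hd : 0 < |x - α| := abs_pos.2 (sub_ne_zero.2 hxα)
  rw [← ENNReal.ofReal_mul (by positivity), ← mul_rpow (by positivity) (by positivity)]
  refine ENNReal.ofReal_le_ofReal (rpow_le_rpow_of_nonpos hd ?_ (neg_nonpos.2 hκ))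
  nlinarith [abs_sub x α, abs_nonneg x, abs_nonneg α]

lemma exists_le_mul_lintegral_abs_sub_rpow_neg (μ : Measure ℝ) [IsProbabilityMeasure μ]
    [NullSingletonClass μ] {κ : ℝ} (hκ : 0 ≤ κ) {F : ℝ → ℝ≥0∞} {C₀ : ℝ} (hC₀ : 0 ≤ C₀)
    (hF : ∀ α, F α ≤ ENNReal.ofReal (C₀ * (1 + |α|) ^ (-κ))
      + ∫⁻ x, ENNReal.ofReal (|x - α| ^ (-κ)) ∂μ) :
    ∃ K : ℝ, ∀ α, F α ≤ ENNReal.ofReal K * ∫⁻ x, ENNReal.ofReal (|x - α| ^ (-κ)) ∂μ := by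
  obtain ⟨c, hc, hc_eq⟩ : ∃ c : ℝ, 0 < c ∧
      ∫⁻ x, ENNReal.ofReal ((1 + |x|) ^ (-κ)) ∂μ = ENNReal.ofReal c := by
    have hpos (x : ℝ) : 0 < (1 + |x|) ^ (-κ) := rpow_pos_of_pos (by positivity) _
    have hc₀ : ∫⁻ x, ENNReal.ofReal ((1 + |x|) ^ (-κ)) ∂μ ≠ 0 :=
      ((lintegral_pos_iff_support (by fun_prop)).2 (by simp [Function.support, hpos])).ne'
    have hc_top : ∫⁻ x, ENNReal.ofReal ((1 + |x|) ^ (-κ)) ∂μ ≠ ⊤ := by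
      refine ne_top_of_le_ne_top (measure_ne_top μ univ) ?_
      rw [← setLIntegral_one, Measure.restrict_univ]
      exact lintegral_mono fun x => ENNReal.ofReal_le_one.2
        (rpow_le_one_of_one_le_of_nonpos (by simp) (neg_nonpos.2 hκ))
    exact ⟨_, ENNReal.toReal_pos hc₀ hc_top, (ENNReal.ofReal_toReal hc_top).symm⟩
  refine ⟨C₀ / c + 1, fun α => (hF α).trans ?_⟩
  have hlow := lintegral_abs_sub_rpow_neg_ge μ hκ α
  rw [hc_eq] at hlow
  calc ENNReal.ofReal (C₀ * (1 + |α|) ^ (-κ)) + ∫⁻ x, ENNReal.ofReal (|x - α| ^ (-κ)) ∂μ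
      = ENNReal.ofReal (C₀ / c) * (ENNReal.ofReal ((1 + |α|) ^ (-κ)) * ENNReal.ofReal c)
          + ∫⁻ x, ENNReal.ofReal (|x - α| ^ (-κ)) ∂μ := by
        rw [← ENNReal.ofReal_mul (by positivity), ← ENNReal.ofReal_mul (by positivity)]
        field_simp
    _ ≤ ENNReal.ofReal (C₀ / c + 1) * ∫⁻ x, ENNReal.ofReal (|x - α| ^ (-κ)) ∂μ := by
        rw [ENNReal.ofReal_add (by positivity) zero_le_one, ENNReal.ofReal_one, add_mul, one_mul]
        gcongr

lemma exponent_bounds_of_lt_inv {κ τ q : ℝ} (hκ : 0 < κ) (hτ : 0 < τ) (hq : 0 < q)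
    (h : κ < (1 + 2 / τ + 1 / q)⁻¹) :
    κ * conjExponent (1 + q) < 1 ∧ 2 * κ ≤ τ * (1 - κ * conjExponent (1 + q))
      ∧ κ ≤ τ ∧ κ ≤ 1 := by
  have hr : conjExponent (1 + q) = 1 + 1 / q := by
    rw [conjExponent, add_sub_cancel_left]
    field_simp
    ring
  have hsum : κ * (1 + 1 / q) + 2 * κ / τ < 1 := by
    have hd : 0 < 1 + 2 / τ + 1 / q := by positivity
    have := mul_lt_mul_of_pos_right h hd
    rw [inv_mul_cancel₀ hd.ne'] at this
    linarith [show κ * (1 + 2 / τ + 1 / q) = κ * (1 + 1 / q) + 2 * κ / τ by ring]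
  have hτκ : τ * (2 * κ / τ) = 2 * κ := by field_simp
  have hκq : 0 < κ * (1 / q) := by positivity
  rw [hr]
  refine ⟨by nlinarith, by nlinarith, by nlinarith, by nlinarith⟩

theorem aizenman_weighted_fractional_moment_bound_general
    (μ : Measure ℝ) [IsProbabilityMeasure μ]
    (f : ℝ → ℝ) (hfmeas : Measurable f)
    (hμf : μ = MeasureTheory.volume.withDensity fun x => ENNReal.ofReal (f x))
    (q : ℝ) (hq : 0 < q) (Q : ℝ)
    (hQint : MeasureTheory.Integrable (fun x => |f x| ^ (1 + q)) MeasureTheory.volume)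
    (hQ : ∫ x, |f x| ^ (1 + q) = Q)
    (τ : ℝ) (hτ₀ : 0 < τ)
    (B : ℝ) (hBint : MeasureTheory.Integrable (fun x => |x| ^ τ) μ)
    (hB : ∫ x, |x| ^ τ ∂μ = B) :
    ∀ κ : ℝ, 0 < κ → κ < (1 + 2 / τ + 1 / q)⁻¹ →
      ∃ K : ℝ, ∀ α : ℝ,
        ∫⁻ x, ENNReal.ofReal (|x| ^ κ / |x - α| ^ κ) ∂μ
          ≤ ENNReal.ofReal K * ∫⁻ x, ENNReal.ofReal (|x - α| ^ (-κ)) ∂μ := by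
  intro κ hκ hκlt
  obtain ⟨hκr, h2κ, hκτ, hκ₁⟩ := exponent_bounds_of_lt_inv hκ hτ₀ hq hκlt
  have hQ₀ : 0 ≤ Q := hQ ▸ integral_nonneg fun x => by positivity
  have hB₀ : 0 ≤ B := hB ▸ integral_nonneg fun x => by positivity
  have hfQ : ∫⁻ x, ENNReal.ofReal (f x) ^ (1 + q) ≤ ENNReal.ofReal Q := by
    rw [← hQ, ofReal_integral_eq_lintegral_ofReal hQint (ae_of_all _ fun x => by positivity)]
    refine lintegral_mono fun x => ?_
    rw [← ENNReal.ofReal_rpow_of_nonneg (abs_nonneg _) (by linarith)]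
    exact ENNReal.rpow_le_rpow (ENNReal.ofReal_le_ofReal (le_abs_self _)) (by linarith)
  have hBμ : ∫⁻ x, ENNReal.ofReal (|x| ^ τ) ∂μ = ENNReal.ofReal B := by
    rw [← hB, ofReal_integral_eq_lintegral_ofReal hBint (ae_of_all _ fun x => by positivity)]
  subst hμf
  obtain ⟨C₀, hC₀, hF⟩ := exists_lintegral_rpow_div_le_add hκ hκ₁ hκτ (sub_nonneg.2 hκr.le) h2κ
    (by positivity) hB₀ hBμ.le (setLIntegral_rpow_neg_withDensity_le hfmeas.ennreal_ofReal
      (.conjExponent (by linarith)) hκ.le hκr hQ₀ hfQ)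
  exact exists_le_mul_lintegral_abs_sub_rpow_neg _ hκ.le hC₀ hF

/-- Aizenman's lemma.  Let `μ` be an absolutely continuous probability
measure on `ℝ` with density `f` such that `∫ |f|^{1+q} = Q < ∞` for some `q > 0`, let
`0 < τ ≤ 1` with `B = ∫ |x|^τ dμ < ∞`.  Then for every `0 < κ < (1 + 2/τ + 1/q)⁻¹` there is
a finite constant `K` such that for all `α ∈ ℝ`,
`∫ |x|^κ / |x−α|^κ dμ(x) ≤ K ∫ |x−α|^{−κ} dμ(x)` (integrals taken in `[0,∞]`). -/
theorem aizenman_weighted_fractional_moment_bound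
    (μ : Measure ℝ) [IsProbabilityMeasure μ]
    (f : ℝ → ℝ) (hfmeas : Measurable f)
    (hμf : μ = MeasureTheory.volume.withDensity fun x => ENNReal.ofReal (f x))
    (q : ℝ) (hq : 0 < q) (Q : ℝ)
    (hQint : MeasureTheory.Integrable (fun x => |f x| ^ (1 + q)) MeasureTheory.volume)
    (hQ : ∫ x, |f x| ^ (1 + q) = Q)
    (τ : ℝ) (hτ₀ : 0 < τ) (hτ₁ : τ ≤ 1)
    (B : ℝ) (hBint : MeasureTheory.Integrable (fun x => |x| ^ τ) μ)
    (hB : ∫ x, |x| ^ τ ∂μ = B) :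
    ∀ κ : ℝ, 0 < κ → κ < (1 + 2 / τ + 1 / q)⁻¹ →
      ∃ K : ℝ, ∀ α : ℝ,
        ∫⁻ x, ENNReal.ofReal (|x| ^ κ / |x - α| ^ κ) ∂μ
          ≤ ENNReal.ofReal K * ∫⁻ x, ENNReal.ofReal (|x - α| ^ (-κ)) ∂μ :=
  aizenman_weighted_fractional_moment_bound_general μ f hfmeas hμf q hq Q hQint hQ τ hτ₀ B hBint hB
end

section
/- Let μ be an absolutely continuous probability measure on ℝ with density f satisfying ∫_ℝ |f(x)|^{1+q} dx = Q < ∞ for some q > 0, and let κ satisfy 0 < κ < q/(1+q). Then for every α ∈ ℝ: ∫_ℝ |x − α|^{−κ} dμ(x) ≤ 1 + κ (2^q Q)^{1/(1+q)} / (q/(1+q) − κ). -/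
open MeasureTheory Real
open scoped ENNReal

/-!
By the layer-cake formula, `∫ |x - α|^{-κ} dμ = ∫_0^∞ μ{|x - α|^{-κ} > t} dt`. The part `t ≤ 1`
contributes at most `μ ℝ = 1`. For `t > 1` the level set lies in the ball of radius `t^{-1/κ}`
about `α`, and Hölder's inequality with exponents `(1 + q)/q` and `1 + q` bounds the `μ`-mass of
a set of length `ℓ` by `ℓ^{q/(1+q)} Q^{1/(1+q)}`. This gives the tail `μ{…} ≤ C t^{-p}` with
`C = (2^q Q)^{1/(1+q)}` and `p = q/((1+q)κ) > 1`, whose integral over `(1, ∞)` is `C/(p - 1)`.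
-/

section Holder

variable {α : Type*} [MeasurableSpace α] {ν : Measure α}

theorem setLIntegral_le_lintegral_rpow_mul_measure_rpow {g : α → ℝ≥0∞} (hg : AEMeasurable g ν)
    {p : ℝ} (hp : 1 ≤ p) (s : Set α) :
    ∫⁻ x in s, g x ∂ν ≤ (∫⁻ x, g x ^ p ∂ν) ^ (1 / p) * ν s ^ (1 - 1 / p) := by
  have key := eLpNorm'_le_eLpNorm'_mul_rpow_measure_univ (μ := ν.restrict s) one_pos hp
    hg.aestronglyMeasurable.restrict
  simp only [eLpNorm'_eq_lintegral_enorm, enorm_eq_self, ENNReal.rpow_one, div_one,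
    Measure.restrict_apply_univ] at key
  refine key.trans ?_
  gcongr
  exact Measure.restrict_le_self

theorem withDensity_ofReal_apply_le [SFinite ν] {f : α → ℝ} (hf : AEMeasurable f ν) {p : ℝ}
    (hp : 1 ≤ p) (s : Set α) :
    ν.withDensity (fun x => ENNReal.ofReal (f x)) s
      ≤ (∫⁻ x, ENNReal.ofReal (|f x| ^ p) ∂ν) ^ (1 / p) * ν s ^ (1 - 1 / p) := by
  calc ν.withDensity (fun x => ENNReal.ofReal (f x)) s
      = ∫⁻ x in s, ENNReal.ofReal (f x) ∂ν := withDensity_apply' _ s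
    _ ≤ ∫⁻ x in s, ENNReal.ofReal |f x| ∂ν := by gcongr; exact le_abs_self _
    _ ≤ (∫⁻ x, ENNReal.ofReal |f x| ^ p ∂ν) ^ (1 / p) * ν s ^ (1 - 1 / p) :=
      setLIntegral_le_lintegral_rpow_mul_measure_rpow hf.abs.ennreal_ofReal hp s
    _ = (∫⁻ x, ENNReal.ofReal (|f x| ^ p) ∂ν) ^ (1 / p) * ν s ^ (1 - 1 / p) := by
      simp_rw [ENNReal.ofReal_rpow_of_nonneg (abs_nonneg _) (zero_le_one.trans hp)]

end Holder

theorem lintegral_Ioi_ofReal_rpow_of_lt {a : ℝ} (ha : a < -1) {c : ℝ} (hc : 0 < c) :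
    ∫⁻ t in Set.Ioi c, ENNReal.ofReal (t ^ a) = ENNReal.ofReal (-c ^ (a + 1) / (a + 1)) := by
  rw [← integral_Ioi_rpow_of_lt ha hc, ofReal_integral_eq_lintegral_ofReal
    (integrableOn_Ioi_rpow_of_lt ha hc)]
  filter_upwards [ae_restrict_mem measurableSet_Ioi] with t ht
  exact rpow_nonneg (hc.trans ht).le a

theorem lintegral_ofReal_le_of_meas_lt_le_rpow {α : Type*} [MeasurableSpace α] {μ : Measure α}
    {g : α → ℝ} (hg₀ : 0 ≤ᵐ[μ] g) (hg : AEMeasurable g μ) {C p : ℝ} (hp : 1 < p)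
    (htail : ∀ t, 1 < t → μ {x | t < g x} ≤ ENNReal.ofReal (C * t ^ (-p))) :
    ∫⁻ x, ENNReal.ofReal (g x) ∂μ ≤ μ Set.univ + ENNReal.ofReal (C / (p - 1)) := by
  rw [lintegral_eq_lintegral_meas_lt μ hg₀ hg, ← Set.Ioc_union_Ioi_eq_Ioi zero_le_one,
    lintegral_union measurableSet_Ioi (Set.Ioc_disjoint_Ioi le_rfl)]
  gcongr
  · calc ∫⁻ t in Set.Ioc (0 : ℝ) 1, μ {x | t < g x}
        ≤ ∫⁻ _ in Set.Ioc (0 : ℝ) 1, μ Set.univ :=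
          lintegral_mono fun _ => measure_mono (Set.subset_univ _)
      _ = μ Set.univ := by simp
  · have hp' : 0 ≤ 1 / (p - 1) := one_div_nonneg.mpr (by linarith)
    calc ∫⁻ t in Set.Ioi (1 : ℝ), μ {x | t < g x}
        ≤ ∫⁻ t in Set.Ioi (1 : ℝ), ENNReal.ofReal C * ENNReal.ofReal (t ^ (-p)) := by
          refine setLIntegral_mono' measurableSet_Ioi fun t ht => ?_
          rw [← ENNReal.ofReal_mul' (rpow_nonneg (zero_le_one.trans ht.le) _)]
          exact htail t ht
      _ = ENNReal.ofReal C * ENNReal.ofReal (1 / (p - 1)) := by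
          rw [lintegral_const_mul' _ _ ENNReal.ofReal_ne_top,
            lintegral_Ioi_ofReal_rpow_of_lt (by linarith) one_pos, one_rpow]
          rw [show -p + 1 = -(p - 1) by ring, div_neg, neg_div, neg_neg]
      _ = ENNReal.ofReal (C / (p - 1)) := by
          rw [← ENNReal.ofReal_mul' hp', mul_one_div]

theorem setOf_lt_abs_sub_rpow_neg_subset_ball {κ t : ℝ} (hκ : 0 < κ) (ht : 0 < t) (α : ℝ) :
    {x | t < |x - α| ^ (-κ)} ⊆ Metric.ball α (t ^ (-κ⁻¹)) := by
  intro x (hx : t < |x - α| ^ (-κ))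
  -- `0 ^ (-κ) = 0` in Lean, so `α` itself is not in the set.
  have hxα : 0 < |x - α| := by
    refine (abs_nonneg _).lt_of_ne fun h => ?_
    rw [← h, zero_rpow (neg_ne_zero.mpr hκ.ne')] at hx
    exact ht.not_gt hx
  rw [Metric.mem_ball, dist_eq, ← inv_neg]
  exact (lt_rpow_inv_iff_of_neg hxα ht (neg_lt_zero.mpr hκ)).mpr hx

theorem volume_withDensity_ofReal_ball_le {f : ℝ → ℝ} (hf : AEMeasurable f) {q : ℝ} (hq : 0 < q)
    (hfq : Integrable fun x => |f x| ^ (1 + q)) (α : ℝ) {r : ℝ} (hr : 0 ≤ r) :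
    volume.withDensity (fun x => ENNReal.ofReal (f x)) (Metric.ball α r)
      ≤ ENNReal.ofReal ((2 ^ q * ∫ x, |f x| ^ (1 + q)) ^ (1 / (1 + q)) * r ^ (q / (1 + q))) := by
  have hQ₀ : 0 ≤ ∫ x, |f x| ^ (1 + q) := integral_nonneg fun x => by positivity
  have hexp : 1 - 1 / (1 + q) = q / (1 + q) := by field_simp; ring
  refine (withDensity_ofReal_apply_le hf (by linarith : (1 : ℝ) ≤ 1 + q) _).trans_eq ?_
  rw [← ofReal_integral_eq_lintegral_ofReal hfq (ae_of_all _ fun x => by positivity), volume_ball,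
    hexp, ENNReal.ofReal_rpow_of_nonneg hQ₀ (by positivity),
    ENNReal.ofReal_rpow_of_nonneg (by positivity) (by positivity),
    ← ENNReal.ofReal_mul (by positivity), mul_rpow (by positivity) hQ₀, mul_rpow zero_le_two hr,
    ← rpow_mul zero_le_two, mul_one_div]
  ring_nf

/-- Let `μ` be an absolutely continuous probability measure on `ℝ` with
density `f` satisfying `∫ |f|^{1+q} = Q < ∞` for some `q > 0`, and let `0 < κ < q/(1+q)`.
Then for every `α ∈ ℝ`,
`∫ |x−α|^{−κ} dμ(x) ≤ 1 + κ (2^q Q)^{1/(1+q)} / (q/(1+q) − κ)`. -/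
theorem inverse_power_moment_bound
    (μ : Measure ℝ) [IsProbabilityMeasure μ]
    (f : ℝ → ℝ) (hfmeas : Measurable f)
    (hμf : μ = MeasureTheory.volume.withDensity fun x => ENNReal.ofReal (f x))
    (q : ℝ) (hq : 0 < q) (Q : ℝ)
    (hQint : MeasureTheory.Integrable (fun x => |f x| ^ (1 + q)) MeasureTheory.volume)
    (hQ : ∫ x, |f x| ^ (1 + q) = Q)
    (κ : ℝ) (hκ₀ : 0 < κ) (hκ₁ : κ < q / (1 + q)) :
    ∀ α : ℝ,
      ∫⁻ x, ENNReal.ofReal (|x - α| ^ (-κ)) ∂μ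
        ≤ ENNReal.ofReal (1 + κ * ((2 : ℝ) ^ q * Q) ^ (1 / (1 + q)) / (q / (1 + q) - κ)) := by
  intro α
  set β := q / (1 + q)
  set C := ((2 : ℝ) ^ q * Q) ^ (1 / (1 + q))
  have htail : ∀ t, 1 < t → μ {x | t < |x - α| ^ (-κ)} ≤ ENNReal.ofReal (C * t ^ (-(β / κ))) := by
    intro t ht
    have ht₀ : 0 < t := one_pos.trans ht
    calc μ {x | t < |x - α| ^ (-κ)}
        ≤ μ (Metric.ball α (t ^ (-κ⁻¹))) :=
          measure_mono (setOf_lt_abs_sub_rpow_neg_subset_ball hκ₀ ht₀ α)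
      _ ≤ ENNReal.ofReal (C * (t ^ (-κ⁻¹)) ^ β) := by
          have h := volume_withDensity_ofReal_ball_le hfmeas.aemeasurable hq hQint α
            (by positivity : 0 ≤ t ^ (-κ⁻¹))
          rwa [hQ, ← hμf] at h
      _ = ENNReal.ofReal (C * t ^ (-(β / κ))) := by
          rw [← rpow_mul ht₀.le, neg_mul, inv_mul_eq_div]
  have hp : 1 < β / κ := (one_lt_div hκ₀).mpr hκ₁
  have hC : 0 ≤ C :=
    rpow_nonneg (mul_nonneg (by positivity) (hQ ▸ integral_nonneg fun x => by positivity)) _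
  refine (lintegral_ofReal_le_of_meas_lt_le_rpow (ae_of_all _ fun x => by positivity)
    (by fun_prop) hp htail).trans_eq ?_
  rw [measure_univ, ← ENNReal.ofReal_one, ← ENNReal.ofReal_add zero_le_one
    (div_nonneg hC (sub_pos.mpr hp).le)]
  congr 2
  field_simp
end
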